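/- arXiv:2210.08480 — 7 statements merged into one kernel-verified Lean document; each statement's English description precedes it below -/
import Mathlib

section
/- For positive reals 0 < λ₁ < λ₂ < ⋯ < λₙ and nonnegative integers k₁ < k₂ < ⋯ < kₙ, the generalized Vandermonde determinant det[λᵢ^{kⱼ}]_{i,j=1..n} is strictly positive. -/
/-!
Expanding along the last row, the determinant as a function of the last point `x` is a
polynomial `P` in `x` with at most `n` monomials, vanishing at the other `n - 1` points, whose
leading coefficient is the generalized Vandermonde determinant of size `n - 1`, positive by
induction. By Descartes' rule of signs `P` has fewer positive roots than monomials, so these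
`n - 1` points are all of its positive roots. Hence every root of `P` lies below `λₙ`, and since
its leading coefficient is positive, `P(λₙ) > 0`.
-/

open Polynomial Finset

namespace Polynomial

variable {R : Type*}

theorem signVariations_lt_card_support [Semiring R] [LinearOrder R] {P : R[X]} (hP : P ≠ 0) :
    P.signVariations < #P.support := by
  induction h : #P.support generalizing P with
  | zero => simp_all
  | succ m ih =>
    by_cases hlead : P.eraseLead = 0
    · simp [signVariations_eq_eraseLead_add_ite hP, hlead, hP]
    · have := ih hlead (card_support_eraseLead' h)
      have := signVariations_le_eraseLead_succ P
      omega

theorem roots_countP_pos_lt_card_support [CommRing R] [LinearOrder R] [IsStrictOrderedRing R]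
    {P : R[X]} (hP : P ≠ 0) : P.roots.countP (0 < ·) < #P.support :=
  (roots_countP_pos_le_signVariations P).trans_lt (signVariations_lt_card_support hP)

theorem card_lt_card_support_of_forall_pos_isRoot [CommRing R] [LinearOrder R]
    [IsStrictOrderedRing R] {P : R[X]} (hP : P ≠ 0) {s : Finset R} (hpos : ∀ x ∈ s, 0 < x)
    (hroot : ∀ x ∈ s, P.IsRoot x) : #s < #P.support := by
  have hle : s.val ≤ P.roots :=
    (Multiset.le_iff_subset s.nodup).2 fun x hx => (mem_roots hP).2 (hroot x hx)
  calc #s = s.val.countP (0 < ·) := (Multiset.countP_eq_card.2 hpos).symm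
    _ ≤ P.roots.countP (0 < ·) := Multiset.countP_le_of_le _ hle
    _ < #P.support := roots_countP_pos_lt_card_support hP

theorem support_sum_monomial_subset [Semiring R] {ι : Type*} (s : Finset ι) (k : ι → ℕ)
    (c : ι → R) : (∑ j ∈ s, monomial (k j) (c j)).support ⊆ s.image k := by
  intro d hd
  by_contra hdk
  refine mem_support_iff.1 hd ?_
  rw [finsetSum_coeff]
  refine Finset.sum_eq_zero fun j hj => coeff_monomial_of_ne _ fun hkj => hdk ?_
  exact hkj ▸ mem_image_of_mem k hj

theorem mem_range_of_isRoot_of_card_support_le [CommRing R] [LinearOrder R]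
    [IsStrictOrderedRing R] {n : ℕ} {P : R[X]} (hP : P ≠ 0) (hcard : #P.support ≤ n + 1)
    {v : Fin n → R} (hv : Function.Injective v) (hpos : ∀ i, 0 < v i)
    (hroot : ∀ i, P.IsRoot (v i)) {y : R} (hy : P.IsRoot y) (hy0 : 0 < y) : y ∈ Set.range v := by
  by_contra hyv
  have hy_notMem : y ∉ univ.image v := by simpa using hyv
  have := card_lt_card_support_of_forall_pos_isRoot hP (s := insert y (univ.image v))
    (by simpa [hy0] using hpos) (by simpa [hy.eq_zero] using hroot)
  rw [card_insert_of_notMem hy_notMem, card_image_of_injective _ hv, card_univ,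
    Fintype.card_fin] at this
  omega

end Polynomial

namespace Matrix

variable {R : Type*} [CommRing R] {n : ℕ}

def genVandermonde (v : Fin n → R) (k : Fin n → ℕ) : Matrix (Fin n) (Fin n) R :=
  of fun i j => v i ^ k j

/-- The Laplace expansion of `(genVandermonde (Fin.snoc v x) k).det` along the last row, as a
polynomial in `x`. -/
noncomputable def genVandermondeCofactorPoly (v : Fin n → R) (k : Fin (n + 1) → ℕ) : R[X] :=
  ∑ j, monomial (k j) ((-1) ^ (n + j : ℕ) * (genVandermonde v (k ∘ j.succAbove)).det)

theorem eval_genVandermondeCofactorPoly (v : Fin n → R) (k : Fin (n + 1) → ℕ) (x : R) :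
    (genVandermondeCofactorPoly v k).eval x = (genVandermonde (Fin.snoc v x) k).det := by
  rw [det_succ_row _ (Fin.last n), genVandermondeCofactorPoly, eval_finsetSum]
  refine Finset.sum_congr rfl fun j _ => ?_
  simp only [eval_monomial, genVandermonde, submatrix, Fin.succAbove_last, Fin.snoc_castSucc,
    Fin.snoc_last, of_apply, Fin.val_last, Function.comp_def]
  ring

theorem isRoot_genVandermondeCofactorPoly (v : Fin n → R) (k : Fin (n + 1) → ℕ) (i : Fin n) :
    (genVandermondeCofactorPoly v k).IsRoot (v i) := by
  rw [IsRoot, eval_genVandermondeCofactorPoly]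
  refine det_zero_of_row_eq (Fin.castSucc_lt_last i).ne ?_
  ext j
  simp [genVandermonde]

theorem coeff_genVandermondeCofactorPoly_last (v : Fin n → R) {k : Fin (n + 1) → ℕ}
    (hk : Function.Injective k) :
    (genVandermondeCofactorPoly v k).coeff (k (Fin.last n)) =
      (genVandermonde v (k ∘ Fin.castSucc)).det := by
  rw [genVandermondeCofactorPoly, finsetSum_coeff, Finset.sum_eq_single (Fin.last n)]
  · simp [Fin.succAbove_last, ← two_mul]
  · intro j _ hj
    exact coeff_monomial_of_ne _ (hk.ne hj.symm)
  · simp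

theorem natDegree_genVandermondeCofactorPoly_le (v : Fin n → R) {k : Fin (n + 1) → ℕ}
    (hk : Monotone k) : (genVandermondeCofactorPoly v k).natDegree ≤ k (Fin.last n) :=
  natDegree_sum_le_of_forall_le _ _ fun j _ =>
    (natDegree_monomial_le _).trans (hk (Fin.le_last j))

theorem card_support_genVandermondeCofactorPoly_le (v : Fin n → R) (k : Fin (n + 1) → ℕ) :
    #(genVandermondeCofactorPoly v k).support ≤ n + 1 :=
  (card_le_card (support_sum_monomial_subset _ _ _)).trans (card_image_le.trans (by simp))

theorem det_genVandermonde_pos {v : Fin n → ℝ} (hpos : ∀ i, 0 < v i) (hv : StrictMono v)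
    {k : Fin n → ℕ} (hk : StrictMono k) : 0 < (genVandermonde v k).det := by
  induction n with
  | zero => simp
  | succ n ih =>
    set P := genVandermondeCofactorPoly (Fin.init v) k
    have hv' : StrictMono (Fin.init v) := hv.comp Fin.strictMono_castSucc
    have hc : 0 < P.coeff (k (Fin.last n)) := by
      rw [coeff_genVandermondeCofactorPoly_last _ hk.injective]
      exact ih (fun i => hpos _) hv' (hk.comp Fin.strictMono_castSucc)
    have hdeg : P.natDegree = k (Fin.last n) :=
      natDegree_eq_of_le_of_coeff_ne_zero
        (natDegree_genVandermondeCofactorPoly_le _ hk.monotone) hc.ne'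
    have hP : P ≠ 0 := by
      rintro h
      rw [h, coeff_zero] at hc
      exact hc.false
    rw [← Fin.snoc_init_self v, ← eval_genVandermondeCofactorPoly]
    refine zero_lt_eval_of_roots_lt_of_leadingCoeff_nonneg (fun y hy => ?_) ?_
    · rcases le_or_gt y 0 with hy0 | hy0
      · exact hy0.trans_lt (hpos _)
      obtain ⟨i, rfl⟩ := mem_range_of_isRoot_of_card_support_le hP
        (card_support_genVandermondeCofactorPoly_le _ _) hv'.injective (fun i => hpos _)
        (isRoot_genVandermondeCofactorPoly _ _) hy hy0
      exact hv (Fin.castSucc_lt_last i)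
    · rw [leadingCoeff, hdeg]
      exact hc.le

end Matrix

theorem generalized_vandermonde_det_pos_general (n : ℕ)
    (l : Fin n → ℝ) (hpos : ∀ i, 0 < l i) (hlmono : StrictMono l)
    (k : Fin n → ℕ) (hkmono : StrictMono k) :
    0 < Matrix.det (Matrix.of fun i j : Fin n => l i ^ k j) :=
  Matrix.det_genVandermonde_pos hpos hlmono hkmono

theorem generalized_vandermonde_det_pos (n : ℕ) (hn : 1 ≤ n)
    (l : Fin n → ℝ) (hpos : ∀ i, 0 < l i) (hlmono : StrictMono l)
    (k : Fin n → ℕ) (hkmono : StrictMono k) :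
    0 < Matrix.det (Matrix.of fun i j : Fin n => l i ^ k j) :=
  generalized_vandermonde_det_pos_general n l hpos hlmono k hkmono
end

section
/- With Φ as the pole-distribution factor on a tuple Λ containing λᵢ, the function (1 − λᵢ)·Φ_Λ, viewed as a rational function of λᵢ, evaluates at λᵢ = 1 to (−1)^{m−h} Φ_{Λ∖λᵢ}, where λᵢ is in position h of the increasing tuple Λ of length m. -/
/-- The pole-distribution factor `Φ` of a tuple of reals. -/
noncomputable def Phi (m : ℕ) (l : Fin m → ℝ) : ℝ :=
  (∏ j : Fin m, ∏ k ∈ Finset.Ioi j, (l k - l j) / (1 - l j * l k)) *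
    ∏ i : Fin m, (1 - l i)⁻¹

/-!
Away from `λᵢ = 1` the factor `1 - λᵢ` cancels the pole `(1 - λᵢ)⁻¹` of `Φ_Λ`, leaving a function
continuous at `1`. There the pair factors `(λ_k - λᵢ) / (1 - λᵢ λ_k)` equal `1` for `k` before
position `h` and `-1` for the `m - h` positions after it, and all remaining factors are those
of `Φ_{Λ∖λᵢ}`.
-/

open Finset Function Filter Topology

noncomputable def pairProd (m : ℕ) (l : Fin m → ℝ) : ℝ :=
  ∏ j : Fin m, ∏ k ∈ Ioi j, (l k - l j) / (1 - l j * l k)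

lemma Phi_eq_pairProd_mul (m : ℕ) (l : Fin m → ℝ) :
    Phi m l = pairProd m l * ∏ i : Fin m, (1 - l i)⁻¹ := rfl

lemma Fin.prod_Ioi_succAbove_of_eq_one {M : Type*} [CommMonoid M] {m : ℕ} (p : Fin (m + 1))
    (j : Fin m) {f : Fin (m + 1) → M} (hf : f p = 1) :
    ∏ k ∈ Ioi (p.succAbove j), f k = ∏ k ∈ Ioi j, f (p.succAbove k) := by
  have hIoi : (Ioi (p.succAbove j)).erase p = (Ioi j).map p.succAboveEmb := by
    ext k
    simp only [mem_erase, Finset.mem_map, mem_Ioi, Fin.coe_succAboveEmb]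
    constructor
    · rintro ⟨hkp, hjk⟩
      obtain ⟨k, rfl⟩ := Fin.exists_succAbove_eq hkp
      exact ⟨k, Fin.succAbove_lt_succAbove_iff.mp hjk, rfl⟩
    · rintro ⟨k, hjk, rfl⟩
      exact ⟨Fin.succAbove_ne p k, Fin.succAbove_lt_succAbove_iff.mpr hjk⟩
  rw [← prod_erase _ hf, hIoi, prod_map, Fin.coe_succAboveEmb]

lemma Fin.prod_pairs_succAbove {M : Type*} [CommMonoid M] {m : ℕ} (p : Fin (m + 1))
    {F : Fin (m + 1) → Fin (m + 1) → M} (hF : ∀ j, j ≠ p → F j p = 1) :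
    ∏ j, ∏ k ∈ Ioi j, F j k =
      (∏ k ∈ Ioi p, F p k) * ∏ j : Fin m, ∏ k ∈ Ioi j, F (p.succAbove j) (p.succAbove k) := by
  rw [Fin.prod_univ_succAbove _ p]
  congr 1
  exact prod_congr rfl fun j _ ↦
    Fin.prod_Ioi_succAbove_of_eq_one p j (hF _ (Fin.succAbove_ne p j))

lemma continuousAt_pairProd {m : ℕ} {l : Fin m → ℝ} (hl : ∀ j k, j < k → l j * l k ≠ 1) :
    ContinuousAt (pairProd m) l := by
  refine tendsto_finsetProd _ fun j _ ↦ tendsto_finsetProd _ fun k hk ↦ ?_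
  refine ContinuousAt.div (by fun_prop) (by fun_prop) ?_
  exact sub_ne_zero.mpr (hl j k (mem_Ioi.mp hk)).symm

lemma one_sub_mul_Phi_update {m : ℕ} (l : Fin (m + 1) → ℝ) (h : Fin (m + 1)) {x : ℝ}
    (hx : x ≠ 1) :
    (1 - x) * Phi (m + 1) (update l h x) =
      pairProd (m + 1) (update l h x) * ∏ i : Fin m, (1 - (l ∘ h.succAbove) i)⁻¹ := by
  have hx' : 1 - x ≠ 0 := sub_ne_zero.mpr hx.symm
  rw [Phi_eq_pairProd_mul, Fin.prod_univ_succAbove _ h, update_self]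
  simp only [update_of_ne (Fin.succAbove_ne h _), comp_apply]
  field_simp

lemma pairProd_update_one {m : ℕ} {l : Fin (m + 1) → ℝ} {h : Fin (m + 1)}
    (h1 : ∀ q, q ≠ h → l q ≠ 1) :
    pairProd (m + 1) (update l h 1) = (-1) ^ (m - (h : ℕ)) * pairProd m (l ∘ h.succAbove) := by
  have hsub : ∀ q, q ≠ h → 1 - l q ≠ 0 := fun q hq ↦ sub_ne_zero.mpr (h1 q hq).symm
  rw [pairProd, Fin.prod_pairs_succAbove h]
  · have hpole : ∀ k ∈ Ioi h, (update l h 1 k - update l h 1 h) /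
        (1 - update l h 1 h * update l h 1 k) = -1 := fun k hk ↦ by
      have hkh : k ≠ h := (mem_Ioi.mp hk).ne'
      rw [update_self, update_of_ne hkh, one_mul, ← neg_sub, neg_div, div_self (hsub k hkh)]
    congr 1
    · rw [prod_congr rfl hpole, prod_const, Fin.card_Ioi, add_tsub_cancel_right]
    · simp only [update_of_ne (Fin.succAbove_ne h _), pairProd, comp_apply]
  · intro j hj
    rw [update_self, update_of_ne hj, mul_one, div_self (hsub j hj)]

theorem one_sub_mul_Phi_eval_at_one_general (m : ℕ) (l : Fin (m + 1) → ℝ)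
    (h : Fin (m + 1))
    (h1 : ∀ q, q ≠ h → l q ≠ 1)
    (h2 : ∀ q r, q ≠ h → r ≠ h → q ≠ r → l q * l r ≠ 1) :
    Filter.Tendsto
      (fun x : ℝ => (1 - x) * Phi (m + 1) (Function.update l h x))
      (nhdsWithin 1 {(1 : ℝ)}ᶜ)
      (nhds ((-1 : ℝ) ^ (m - (h : ℕ)) * Phi m (l ∘ h.succAbove))) := by
  have hden : ∀ j k, j < k → update l h 1 j * update l h 1 k ≠ 1 := by
    intro j k hjk
    rcases eq_or_ne j h with rfl | hj
    · simpa [update_of_ne hjk.ne'] using h1 k hjk.ne'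
    rcases eq_or_ne k h with rfl | hk
    · simpa [update_of_ne hj] using h1 j hj
    simpa [update_of_ne hj, update_of_ne hk] using h2 j k hj hk hjk.ne
  have hcont : ContinuousAt (fun x ↦ pairProd (m + 1) (update l h x)) 1 :=
    (continuousAt_pairProd hden).comp (continuousAt_const.update h continuousAt_id)
  have hlim : Tendsto
      (fun x ↦ pairProd (m + 1) (update l h x) * ∏ i : Fin m, (1 - (l ∘ h.succAbove) i)⁻¹)
      (𝓝[≠] 1)
      (𝓝 (pairProd (m + 1) (update l h 1) * ∏ i : Fin m, (1 - (l ∘ h.succAbove) i)⁻¹)) :=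
    (hcont.mul continuousAt_const).continuousWithinAt.tendsto
  rw [pairProd_update_one h1, mul_assoc, ← Phi_eq_pairProd_mul] at hlim
  refine hlim.congr' ?_
  filter_upwards [self_mem_nhdsWithin] with x hx
  exact (one_sub_mul_Phi_update l h hx).symm

/-- Eq. (38): `(1 - λᵢ)·Φ_Λ`, as a rational function of the entry `λᵢ` in
(0-based) position `h` of the tuple `Λ` of length `m+1`, evaluates at `λᵢ = 1`
to `(-1)^{(m+1)-(h+1)} Φ_{Λ∖λᵢ}`. -/
theorem one_sub_mul_Phi_eval_at_one (m : ℕ) (l : Fin (m + 1) → ℝ)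
    (h : Fin (m + 1)) (hmono : StrictMono l)
    (h1 : ∀ q, q ≠ h → l q ≠ 1)
    (h2 : ∀ q r, q ≠ h → r ≠ h → q ≠ r → l q * l r ≠ 1) :
    Filter.Tendsto
      (fun x : ℝ => (1 - x) * Phi (m + 1) (Function.update l h x))
      (nhdsWithin 1 {(1 : ℝ)}ᶜ)
      (nhds ((-1 : ℝ) ^ (m - (h : ℕ)) * Phi m (l ∘ h.succAbove))) :=
  one_sub_mul_Phi_eval_at_one_general m l h h1 h2
end

section
/- With Φ the pole-distribution factor on a tuple Λ containing λᵢ (position h) and λⱼ (position s, h < s), the function (1 − λᵢλⱼ)·Φ_Λ evaluated at λⱼ = 1/λᵢ equals (−1)^{s−h} · ((1 + λᵢ)/(1 − λᵢ)) · Φ_{Λ∖λᵢ∖λⱼ}. -/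
open Finset

theorem Fin.prod_prod_Ioi_succAbove {M : Type*} [CommMonoid M] {n : ℕ}
    (g : Fin (n + 1) → Fin (n + 1) → M) (p : Fin (n + 1)) :
    ∏ q, ∏ r ∈ Ioi q, g q r =
      (∏ k, if p.succAbove k < p then g (p.succAbove k) p else g p (p.succAbove k)) *
        ∏ k, ∏ k' ∈ Ioi k, g (p.succAbove k) (p.succAbove k') := by
  simp only [← filter_lt_eq_Ioi, prod_filter, Fin.prod_univ_succAbove _ p, lt_self_iff_false,
    if_false, one_mul, Fin.succAbove_lt_succAbove_iff, prod_mul_distrib]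
  rw [← mul_assoc, ← prod_mul_distrib]
  congr 1
  refine prod_congr rfl fun k _ => ?_
  rcases (p.succAbove_ne k).lt_or_gt with h | h <;> simp [h, h.not_gt]

theorem Fin.prod_ite_succAbove_lt_neg_one {R : Type*} [CommMonoid R] [HasDistribNeg R] {n : ℕ}
    (p : Fin (n + 1)) :
    ∏ k : Fin n, (if p.succAbove k < p then 1 else -1 : R) = (-1) ^ (n - p) := by
  simp_rw [Fin.succAbove_lt_iff_castSucc_lt, Fin.lt_def, Fin.val_castSucc]
  rw [Fin.prod_univ_eq_prod_range (fun k => if k < (p : ℕ) then (1 : R) else -1), prod_ite,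
    prod_const_one, one_mul, Finset.prod_const, filter_not, range_eq_Ico, Ico_filter_lt,
    Ico_sdiff_Ico_left, Nat.card_Ico]
  congr 1
  omega

section PhiFactor

variable {K : Type*} [Field K]

def phiFactor (u v : K) : K := (v - u) / (1 - u * v)

theorem phiFactor_swap (u v : K) : phiFactor v u = -phiFactor u v := by
  rw [phiFactor, phiFactor, mul_comm, ← neg_div, neg_sub]

theorem phiFactor_inv_mul_phiFactor {u a : K} (ha : a ≠ 0) (hu : u ≠ a) (hua : u * a ≠ 1) :
    phiFactor u a⁻¹ * phiFactor u a = 1 := by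
  have h1 : a - u ≠ 0 := sub_ne_zero.mpr hu.symm
  have h2 : 1 - a * u ≠ 0 := by rw [mul_comm]; exact sub_ne_zero.mpr hua.symm
  rw [phiFactor, phiFactor, mul_comm u a]
  field_simp

theorem continuousAt_phiFactor [TopologicalSpace K] [IsTopologicalDivisionRing K] {u x : K}
    (h : u * x ≠ 1) : ContinuousAt (phiFactor u) x :=
  (continuousAt_id.sub continuousAt_const).div (continuousAt_const.sub
    (continuousAt_const.mul continuousAt_id)) (sub_ne_zero.mpr h.symm)

end PhiFactor

theorem Phi_eq_prod_phiFactor (n : ℕ) (l : Fin n → ℝ) :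
    Phi n l = (∏ q, ∏ r ∈ Ioi q, phiFactor (l q) (l r)) * ∏ q, (1 - l q)⁻¹ := rfl

theorem Phi_succ (n : ℕ) (l : Fin (n + 1) → ℝ) (p : Fin (n + 1)) :
    Phi (n + 1) l = (-1) ^ (n - p) * (∏ k, phiFactor (l (p.succAbove k)) (l p)) *
      (1 - l p)⁻¹ * Phi n (l ∘ p.succAbove) := by
  have hsign : ∀ k, (if p.succAbove k < p then phiFactor (l (p.succAbove k)) (l p)
      else phiFactor (l p) (l (p.succAbove k))) =
      (if p.succAbove k < p then 1 else -1) * phiFactor (l (p.succAbove k)) (l p) := by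
    intro k
    split_ifs
    · rw [one_mul]
    · rw [phiFactor_swap, neg_one_mul]
  rw [Phi_eq_prod_phiFactor, Phi_eq_prod_phiFactor, Fin.prod_prod_Ioi_succAbove _ p,
    Fin.prod_univ_succAbove (fun q => (1 - l q)⁻¹) p]
  simp only [hsign, prod_mul_distrib, Fin.prod_ite_succAbove_lt_neg_one, Function.comp_apply]
  ring

section TwoEntries

variable {n : ℕ} (l : Fin (n + 2) → ℝ) (j : Fin (n + 2)) (i : Fin (n + 1))

theorem Phi_succ_succ :
    Phi (n + 2) l = (-1) ^ (n + 1 - j) * (-1) ^ (n - i) *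
      phiFactor (l (j.succAbove i)) (l j) * (1 - l j)⁻¹ * (1 - l (j.succAbove i))⁻¹ *
      (∏ k, phiFactor (l (j.succAbove (i.succAbove k))) (l j) *
        phiFactor (l (j.succAbove (i.succAbove k))) (l (j.succAbove i))) *
      Phi n ((l ∘ j.succAbove) ∘ i.succAbove) := by
  rw [Phi_succ _ l j, Phi_succ _ _ i, Fin.prod_univ_succAbove _ i, prod_mul_distrib]
  simp only [Function.comp_apply]
  ring

noncomputable def regularPart (x : ℝ) : ℝ :=
  (x - l (j.succAbove i)) * (1 - x)⁻¹ * (1 - l (j.succAbove i))⁻¹ *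
    ∏ k, phiFactor (l (j.succAbove (i.succAbove k))) x *
      phiFactor (l (j.succAbove (i.succAbove k))) (l (j.succAbove i))

theorem one_sub_mul_Phi_update_s6 {x : ℝ} (hx : l (j.succAbove i) * x ≠ 1) :
    (1 - l (j.succAbove i) * x) * Phi (n + 2) (Function.update l j x) =
      (-1) ^ (n + 1 - j) * (-1) ^ (n - i) * regularPart l j i x *
        Phi n ((l ∘ j.succAbove) ∘ i.succAbove) := by
  have hpole : (1 - l (j.succAbove i) * x) * phiFactor (l (j.succAbove i)) x =
      x - l (j.succAbove i) := mul_div_cancel₀ _ (sub_ne_zero.mpr hx.symm)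
  have hupd : ∀ k, Function.update l j x (j.succAbove k) = l (j.succAbove k) :=
    fun k => Function.update_of_ne (j.succAbove_ne k) _ _
  rw [Phi_succ_succ, Function.update_comp_eq_of_forall_ne _ _ j.succAbove_ne,
    Function.update_self]
  simp only [hupd, regularPart]
  linear_combination (-1) ^ (n + 1 - (j : ℕ)) * (-1) ^ (n - (i : ℕ)) * (1 - x)⁻¹ *
    (1 - l (j.succAbove i))⁻¹ * (∏ k, phiFactor (l (j.succAbove (i.succAbove k))) x *
      phiFactor (l (j.succAbove (i.succAbove k))) (l (j.succAbove i))) *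
    Phi n ((l ∘ j.succAbove) ∘ i.succAbove) * hpole

theorem continuousAt_regularPart {x : ℝ} (hx : x ≠ 1)
    (hk : ∀ k, l (j.succAbove (i.succAbove k)) * x ≠ 1) :
    ContinuousAt (regularPart l j i) x := by
  have := fun k => continuousAt_phiFactor (hk k)
  have : 1 - x ≠ 0 := sub_ne_zero.mpr hx.symm
  unfold regularPart
  fun_prop (disch := assumption)

theorem regularPart_inv (ha0 : l (j.succAbove i) ≠ 0) (ha1 : l (j.succAbove i) ≠ 1)
    (hk : ∀ k, l (j.succAbove (i.succAbove k)) ≠ l (j.succAbove i))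
    (hk' : ∀ k, l (j.succAbove (i.succAbove k)) * l (j.succAbove i) ≠ 1) :
    regularPart l j i (l (j.succAbove i))⁻¹ =
      -((1 + l (j.succAbove i)) / (1 - l (j.succAbove i))) := by
  have : 1 - l (j.succAbove i) ≠ 0 := sub_ne_zero.mpr ha1.symm
  rw [regularPart, prod_eq_one fun k _ => phiFactor_inv_mul_phiFactor ha0 (hk k) (hk' k),
    mul_one]
  field_simp
  ring

end TwoEntries

theorem one_sub_prod_mul_Phi_eval_at_inv_general (m : ℕ) (l : Fin (m + 2) → ℝ)
    (i j : Fin (m + 2)) (hij : (i : ℕ) < (j : ℕ))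
    (hi0 : l i ≠ 0) (hi1 : l i ≠ 1)
    (h2 : ∀ q r, q ≠ j → r ≠ j → q ≠ r → l q * l r ≠ 1)
    (h3 : ∀ q, q ≠ i → q ≠ j → l q ≠ l i) :
    Filter.Tendsto
      (fun x : ℝ => (1 - l i * x) * Phi (m + 2) (Function.update l j x))
      (nhdsWithin (l i)⁻¹ {((l i)⁻¹ : ℝ)}ᶜ)
      (nhds ((-1 : ℝ) ^ ((j : ℕ) - (i : ℕ)) * ((1 + l i) / (1 - l i)) *
        Phi m ((l ∘ j.succAbove) ∘
          (Fin.castLT i (lt_of_lt_of_le hij (Nat.lt_succ_iff.mp j.isLt))).succAbove))) := by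
  set i' := Fin.castLT i (lt_of_lt_of_le hij (Nat.lt_succ_iff.mp j.isLt))
  have hi' : j.succAbove i' = i := by
    rw [Fin.succAbove_of_castSucc_lt _ _ (by simpa [i'] using hij), Fin.castSucc_castLT]
  have hk : ∀ k, j.succAbove (i'.succAbove k) ≠ i ∧ j.succAbove (i'.succAbove k) ≠ j :=
    fun k => ⟨hi' ▸ Fin.succAbove_right_injective.ne (i'.succAbove_ne k), j.succAbove_ne _⟩
  have hcont := continuousAt_regularPart l j i' (x := (l i)⁻¹) (by simpa using hi1)
    fun k h => h3 _ (hk k).1 (hk k).2 ((mul_inv_eq_one₀ hi0).mp h)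
  have hval := regularPart_inv l j i'
  have heq := fun x => one_sub_mul_Phi_update_s6 l j i' (x := x)
  rw [hi'] at hval heq
  have hsign : (-1 : ℝ) ^ ((j : ℕ) - (i : ℕ)) =
      (-1) ^ (m + 1 - (j : ℕ)) * (-1) ^ (m - (i' : ℕ)) * (-1) := by
    rw [mul_assoc, ← pow_succ, ← pow_add, Fin.val_castLT,
      show m + 1 - (j : ℕ) + (m - i + 1) = (j - i) + 2 * (m + 1 - j) by omega,
      pow_add, pow_mul, neg_one_sq, one_pow, mul_one]
  have hlimit : (-1 : ℝ) ^ ((j : ℕ) - (i : ℕ)) * ((1 + l i) / (1 - l i)) =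
      (-1) ^ (m + 1 - (j : ℕ)) * (-1) ^ (m - (i' : ℕ)) * regularPart l j i' (l i)⁻¹ := by
    rw [hsign, hval hi0 hi1 (fun k => h3 _ (hk k).1 (hk k).2)
      (fun k => h2 _ _ (hk k).2 (Fin.ne_of_lt hij) (hk k).1)]
    ring
  rw [hlimit]
  refine Filter.Tendsto.congr' (eventually_mem_nhdsWithin.mono fun x hx =>
    (heq x fun h => hx (eq_inv_of_mul_eq_one_right h)).symm)
    (ContinuousAt.tendsto ?_ |>.mono_left nhdsWithin_le_nhds)
  fun_prop

/-- Eq. (39): `(1 - λᵢλⱼ)·Φ_Λ`, viewed as a rational function of the entry `λⱼ`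
(in 0-based position `j`, with `λᵢ` in earlier position `i`) of the tuple `Λ`
of length `m+2`, evaluates at `λⱼ = 1/λᵢ` to
`(-1)^{(j+1)-(i+1)} · (1+λᵢ)/(1-λᵢ) · Φ_{Λ∖λᵢ∖λⱼ}`. -/
theorem one_sub_prod_mul_Phi_eval_at_inv (m : ℕ) (l : Fin (m + 2) → ℝ)
    (i j : Fin (m + 2)) (hij : (i : ℕ) < (j : ℕ)) (hmono : StrictMono l)
    (hi0 : l i ≠ 0) (hi1 : l i ≠ 1) (hi1' : l i ≠ -1)
    (h1 : ∀ q, q ≠ j → l q ≠ 1)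
    (h2 : ∀ q r, q ≠ j → r ≠ j → q ≠ r → l q * l r ≠ 1)
    (h3 : ∀ q, q ≠ i → q ≠ j → l q ≠ l i) :
    Filter.Tendsto
      (fun x : ℝ => (1 - l i * x) * Phi (m + 2) (Function.update l j x))
      (nhdsWithin (l i)⁻¹ {((l i)⁻¹ : ℝ)}ᶜ)
      (nhds ((-1 : ℝ) ^ ((j : ℕ) - (i : ℕ)) * ((1 + l i) / (1 - l i)) *
        Phi m ((l ∘ j.succAbove) ∘
          (Fin.castLT i (lt_of_lt_of_le hij (Nat.lt_succ_iff.mp j.isLt))).succAbove))) :=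
  one_sub_prod_mul_Phi_eval_at_inv_general m l i j hij hi0 hi1 h2 h3
end

section
/- Denote Υₙ = ∏_{i=1}^n λᵢ and Υ_{n∖k} = ∏_{i≠k} λᵢ, and Φ the pole-distribution factor. Then (1 − Υₙ)·Φ_{λ₁⋯λₙ} = ∑_{k=1}^n (−1)^{1+k} Υ_{n∖k} Φ_{λ₁⋯λₙ∖λₖ}, as an identity of rational functions in λ₁,…,λₙ. -/
open Finset Matrix Function

theorem Matrix.det_vandermonde_cons {R : Type*} [CommRing R] {n : ℕ} (a : R) (w : Fin n → R) :
    (vandermonde (Fin.cons a w : Fin (n + 1) → R)).det =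
      (∏ i, (w i - a)) * (vandermonde w).det := by
  rw [det_vandermonde, det_vandermonde, Fin.prod_univ_succ]
  simp [Fin.prod_Ioi_succ]

theorem Matrix.neg_one_pow_mul_det_vandermonde {R : Type*} [CommRing R] {n : ℕ}
    (x : Fin (n + 1) → R) (k : Fin (n + 1)) :
    (-1) ^ (k : ℕ) * (vandermonde x).det =
      (∏ i, (x (k.succAbove i) - x k)) * (vandermonde (x ∘ k.succAbove)).det := by
  have hcycle : x ∘ k.cycleRange.symm = Fin.cons (x k) (x ∘ k.succAbove) := by
    ext i
    cases i using Fin.cases <;> simp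
  calc (-1) ^ (k : ℕ) * (vandermonde x).det
      = ((vandermonde x).submatrix k.cycleRange.symm id).det := by
        simp [det_permute, Equiv.Perm.sign_symm]
    _ = (vandermonde (Fin.cons (x k) (x ∘ k.succAbove))).det := by
        rw [← hcycle]
        rfl
    _ = _ := det_vandermonde_cons _ _

theorem Fin.prod_univ_erase {M : Type*} [CommMonoid M] {n : ℕ} (f : Fin (n + 1) → M)
    (k : Fin (n + 1)) : ∏ i ∈ univ.erase k, f i = ∏ i : Fin n, f (k.succAbove i) := by
  rw [← compl_singleton, ← Fin.image_succAbove_univ, prod_image fun _ _ _ _ h ↦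
    Fin.succAbove_right_injective h]

theorem Fin.prod_prod_Ioi_succAbove_of_symm {M : Type*} [CommMonoid M] {n : ℕ}
    (g : Fin (n + 1) → Fin (n + 1) → M) (hg : ∀ i j, g i j = g j i) (k : Fin (n + 1)) :
    ∏ i, ∏ j ∈ Ioi i, g i j =
      (∏ i : Fin n, g (k.succAbove i) k) *
        ∏ i : Fin n, ∏ j ∈ Ioi i, g (k.succAbove i) (k.succAbove j) := by
  have hIoi : ∀ {m} (i : Fin m) (f : Fin m → M),
      ∏ j ∈ Ioi i, f j = ∏ j, if i < j then f j else 1 := by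
    intro m i f
    rw [← filter_lt_eq_Ioi, prod_filter]
  simp only [hIoi]
  rw [Fin.prod_univ_succAbove _ k]
  simp only [Fin.prod_univ_succAbove _ k, lt_irrefl, if_false, one_mul,
    Fin.succAbove_lt_succAbove_iff, prod_mul_distrib]
  rw [← mul_assoc, ← prod_mul_distrib]
  congr 1
  refine prod_congr rfl fun i _ ↦ ?_
  rcases (k.succAbove_ne i).lt_or_gt with h | h
  · simp [h, h.not_gt]
  · simp [h, h.not_gt, hg k]
open Polynomial in
theorem Polynomial.sum_eval_div_prod_succAbove_sub_eq_zero {K : Type*} [Field K] {m : ℕ}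
    {v : Fin (m + 1) → K} (hv : Injective v) {P : K[X]} (hP : P.degree < m) :
    ∑ i, P.eval (v i) / ∏ j : Fin m, (v (i.succAbove j) - v i) = 0 := by
  have h := Lagrange.coeff_eq_sum (s := univ) hv.injOn (P := P)
    (by rw [card_univ, Fintype.card_fin]; exact hP.trans (WithBot.coe_lt_coe.2 m.lt_succ_self))
  simp only [card_univ, Fintype.card_fin, add_tsub_cancel_right, coeff_eq_zero_of_degree_lt hP,
    Fin.prod_univ_erase] at h
  have hflip : ∀ i, ∏ j : Fin m, (v (i.succAbove j) - v i) =
      (-1) ^ m * ∏ j : Fin m, (v i - v (i.succAbove j)) := by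
    intro i
    simpa using prod_neg (s := univ) fun j ↦ v i - v (i.succAbove j)
  simp only [hflip, mul_comm ((-1 : K) ^ m), ← div_div, ← sum_div, ← h, zero_div]

open Polynomial in
theorem sum_one_sub_mul_prod_div_eq_one_sub_prod {K : Type*} [Field K] {n : ℕ}
    {x : Fin (n + 1) → K} (hx : Injective x) (h0 : ∀ i, x i ≠ 0) (h1 : ∀ i, x i ≠ -1) :
    ∑ k, (1 - x k) * (∏ j, x (k.succAbove j) * (1 - x (k.succAbove j) * x k)) /
        ∏ j, (x (k.succAbove j) - x k) = 1 - ∏ i, x i := by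
  set v : Fin (n + 3) → K := Fin.cons 0 (Fin.cons (-1) x)
  have hv : Injective v := by
    refine Fin.cons_injective_iff.2 ⟨?_, Fin.cons_injective_iff.2 ⟨fun ⟨i, hi⟩ ↦ h1 i hi, hx⟩⟩
    rintro ⟨i, hi⟩
    cases i using Fin.cases with
    | zero => simp at hi
    | succ i => exact h0 i hi
  set P : K[X] := ∏ i, C (x i) * (1 - C (x i) * X)
  have hP : P.degree < (n + 2 : ℕ) := by
    calc P.degree ≤ ∑ i, (C (x i) * (1 - C (x i) * X)).degree := degree_prod_le _ _
      _ ≤ ∑ _i : Fin (n + 1), (1 : WithBot ℕ) := by gcongr; compute_degree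
      _ = (n + 1 : ℕ) := by simp
      _ < (n + 2 : ℕ) := by exact_mod_cast (n + 1).lt_succ_self
  have hw0 : ∏ j : Fin (n + 2), (v (Fin.succAbove 0 j) - v 0) = -∏ i, x i := by
    simp [v, Fin.prod_univ_succ (n := n + 1)]
  have hw1 : ∏ j : Fin (n + 2), (v ((Fin.succ 0).succAbove j) - v (Fin.succ 0)) =
      ∏ i, (x i + 1) := by
    simp [v, Fin.prod_univ_succ (n := n + 1)]
  have hwx : ∀ k, ∏ j : Fin (n + 2), (v (k.succ.succ.succAbove j) - v k.succ.succ) =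
      x k * (x k + 1) * ∏ j, (x (k.succAbove j) - x k) := by
    intro k
    simp only [v, Fin.prod_univ_succ (n := n + 1), Fin.prod_univ_succ (n := n), Fin.cons_zero,
      Fin.cons_succ, Fin.succ_succAbove_zero, Fin.succ_succAbove_succ]
    ring
  have hP0 : P.eval (v 0) = ∏ i, x i := by simp [P, v, eval_prod]
  have hP1 : P.eval (v (Fin.succ 0)) = (∏ i, x i) * ∏ i, (x i + 1) := by
    simp [P, v, eval_prod, ← prod_mul_distrib, add_comm]
  have hPx : ∀ k, P.eval (v k.succ.succ) = x k * (x k + 1) *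
      ((1 - x k) * ∏ j, x (k.succAbove j) * (1 - x (k.succAbove j) * x k)) := by
    intro k
    simp only [P, v, eval_prod, Fin.cons_succ, eval_mul, eval_C, eval_sub, eval_one, eval_X]
    rw [Fin.prod_univ_succAbove _ k]
    ring
  have hprod : ∏ i, x i ≠ 0 := prod_ne_zero_iff.2 fun i _ ↦ h0 i
  have hx1 : ∀ i, x i + 1 ≠ 0 := fun i h ↦ h1 i (eq_neg_of_add_eq_zero_left h)
  have hprod1 : ∏ i, (x i + 1) ≠ 0 := prod_ne_zero_iff.2 fun i _ ↦ hx1 i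
  have := sum_eval_div_prod_succAbove_sub_eq_zero hv hP
  rw [Fin.sum_univ_succ, Fin.sum_univ_succ, hw0, hw1, hP0, hP1, div_neg_self hprod,
    mul_div_cancel_right₀ _ hprod1] at this
  simp only [hwx, hPx, mul_div_mul_left _ _ (mul_ne_zero (h0 _) (hx1 _))] at this
  linear_combination this

theorem one_sub_prod_mul_det_vandermonde_of_injective {K : Type*} [Field K] {n : ℕ}
    {x : Fin (n + 1) → K} (hx : Injective x) (h0 : ∀ i, x i ≠ 0) (h1 : ∀ i, x i ≠ -1) :
    (1 - ∏ i, x i) * (vandermonde x).det =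
      ∑ k : Fin (n + 1), (-1) ^ (k : ℕ) * (1 - x k) *
        (∏ j, x (k.succAbove j) * (1 - x (k.succAbove j) * x k)) *
          (vandermonde (x ∘ k.succAbove)).det := by
  rw [← sum_one_sub_mul_prod_div_eq_one_sub_prod hx h0 h1, sum_mul]
  refine sum_congr rfl fun k _ ↦ ?_
  have hQ : ∏ j, (x (k.succAbove j) - x k) ≠ 0 :=
    prod_ne_zero_iff.2 fun j _ ↦ sub_ne_zero.2 (hx.ne (k.succAbove_ne j))
  have hV : (vandermonde x).det =
      (-1) ^ (k : ℕ) *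
        ((∏ j, (x (k.succAbove j) - x k)) * (vandermonde (x ∘ k.succAbove)).det) := by
    rw [← neg_one_pow_mul_det_vandermonde, ← mul_assoc, ← mul_pow, neg_one_mul, neg_neg, one_pow,
      one_mul]
  rw [hV]
  field_simp

open MvPolynomial in
theorem one_sub_prod_mul_det_vandermonde {R : Type*} [CommRing R] {n : ℕ}
    (x : Fin (n + 1) → R) :
    (1 - ∏ i, x i) * (vandermonde x).det =
      ∑ k : Fin (n + 1), (-1) ^ (k : ℕ) * (1 - x k) *
        (∏ j, x (k.succAbove j) * (1 - x (k.succAbove j) * x k)) *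
          (vandermonde (x ∘ k.succAbove)).det := by
  let A := MvPolynomial (Fin (n + 1)) ℤ
  let K := FractionRing A
  have hinj := IsFractionRing.injective A K
  have hX0 : ∀ i, algebraMap A K (X i) ≠ 0 := fun i ↦ by simpa using X_ne_zero i
  have hX1 : ∀ i, algebraMap A K (X i) ≠ -1 := fun i h ↦ by
    have := congrArg (MvPolynomial.eval 0) (hinj (h.trans (by simp) : _ = algebraMap A K (-1)))
    simp at this
  have hgen : (1 - ∏ i, (X i : A)) * (vandermonde X).det =
      ∑ k : Fin (n + 1), (-1) ^ (k : ℕ) * (1 - X k) *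
        (∏ j, X (k.succAbove j) * (1 - X (k.succAbove j) * (X k : A))) *
          (vandermonde (X ∘ k.succAbove)).det := by
    apply hinj
    simpa [det_vandermonde] using
      one_sub_prod_mul_det_vandermonde_of_injective (hinj.comp X_injective) hX0 hX1
  simpa [det_vandermonde] using congrArg (aeval x) hgen

theorem Phi_eq_det_vandermonde_div (m : ℕ) (l : Fin m → ℝ) :
    Phi m l = (vandermonde l).det /
      ((∏ i, ∏ j ∈ Ioi i, (1 - l i * l j)) * ∏ i, (1 - l i)) := by
  simp only [Phi, det_vandermonde, div_eq_mul_inv, prod_mul_distrib, prod_inv_distrib, mul_inv]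
  ring

theorem Phi_comp_succAbove {n : ℕ} {l : Fin (n + 1) → ℝ} (h1 : ∀ i, l i ≠ 1)
    (h2 : ∀ i j, i ≠ j → l i * l j ≠ 1) (k : Fin (n + 1)) :
    Phi n (l ∘ k.succAbove) = (1 - l k) * (∏ j, (1 - l (k.succAbove j) * l k)) *
      (vandermonde (l ∘ k.succAbove)).det /
        ((∏ i, ∏ j ∈ Ioi i, (1 - l i * l j)) * ∏ i, (1 - l i)) := by
  have hk : (1 - l k) * ∏ j, (1 - l (k.succAbove j) * l k) ≠ 0 :=
    mul_ne_zero (sub_ne_zero.2 (h1 k).symm) (prod_ne_zero_iff.2 fun j _ ↦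
      sub_ne_zero.2 (h2 _ _ (k.succAbove_ne j)).symm)
  rw [Phi_eq_det_vandermonde_div, Fin.prod_prod_Ioi_succAbove_of_symm _ (fun i j ↦ by ring) k,
    Fin.prod_univ_succAbove _ k, ← mul_div_mul_left _ _ hk]
  simp only [Function.comp_apply]
  ring

-- `k` is 0-based, so the paper's sign `(-1)^{1+k}` reads `(-1)^{1+(k+1)}` here.
/-- Lemma 2: `(1 - Υₙ)·Φ_{λ₁⋯λₙ} = ∑ₖ (-1)^{1+k} Υ_{n∖k} Φ_{λ₁⋯λₙ∖λₖ}`,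
with `k` ranging over 1-based positions (so the 0-based index `k` gets the
sign `(-1)^{1+(k+1)}`). -/
theorem one_sub_prod_mul_Phi_eq_sum (n : ℕ) (l : Fin (n + 1) → ℝ)
    (h1 : ∀ i, l i ≠ 1) (h2 : ∀ i j, i ≠ j → l i * l j ≠ 1) :
    (1 - ∏ i, l i) * Phi (n + 1) l =
      ∑ k : Fin (n + 1), (-1 : ℝ) ^ (1 + ((k : ℕ) + 1)) *
        (∏ i ∈ Finset.univ.erase k, l i) * Phi n (l ∘ k.succAbove) := by
  rw [Phi_eq_det_vandermonde_div, ← mul_div_assoc, one_sub_prod_mul_det_vandermonde, sum_div]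
  refine sum_congr rfl fun k _ ↦ ?_
  rw [Phi_comp_succAbove h1 h2, Fin.prod_univ_erase, prod_mul_distrib]
  ring
end

section
/- For a full row rank matrix Z ∈ ℝ^{n×m}, the Lebesgue volume of the zonotope C(Z) = {∑_{i=1}^m c_i z_i : c_i ∈ [0,1]} equals ∑ over all n-element subsets {i₁<⋯<iₙ} of {1,…,m} of |det[z_{i₁}, …, z_{iₙ}]|. -/
/-!
Induction on the number of generators. Splitting off the first generator `w`, the zonotope of
`(w, u)` is `[0, w] + C(u)`. A linear map `L` multiplies both the volume and the minor sum by
`|det L|`, so for `w ≠ 0` one may assume `w = e₀`. Then Cavalieri's principle in the first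
coordinate gives `vol ([0, e₀] + A) = vol A + vol (π A)` for compact convex `A`, where `π` forgets
the first coordinate; on the other side, the `n`-minors of `(e₀, u)` are those of `u` together
with, by cofactor expansion along `e₀`, the `(n - 1)`-minors of `π ∘ u`.
-/

open MeasureTheory Set
open Finset (univ powersetCard)
open scoped ENNReal Pointwise

theorem Finset.sum_powersetCard_univ_fin_succ {M : Type*} [AddCommMonoid M] {m : ℕ} (n : ℕ)
    (f : Finset (Fin (m + 1)) → M) :
    ∑ s ∈ powersetCard (n + 1) univ, f s =
      ∑ s ∈ powersetCard (n + 1) univ, f (s.map (Fin.succEmb m)) +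
        ∑ t ∈ powersetCard n univ, f (insert 0 (t.map (Fin.succEmb m))) := by
  have h0 : (0 : Fin (m + 1)) ∉ univ.map (Fin.succEmb m) := by simp [Fin.succ_ne_zero]
  have huniv : (univ : Finset (Fin (m + 1))) = insert 0 (univ.map (Fin.succEmb m)) := by
    rw [Fin.univ_succ, Finset.cons_eq_insert]; rfl
  rw [huniv, Finset.powersetCard_succ_insert h0, Finset.sum_union, Finset.sum_image,
    Finset.powersetCard_map, Finset.powersetCard_map, Finset.sum_map, Finset.sum_map]
  · rfl
  · intro s hs t ht hst
    have hs0 : (0 : Fin (m + 1)) ∉ s := fun h => h0 ((Finset.mem_powersetCard.mp hs).1 h)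
    have ht0 : (0 : Fin (m + 1)) ∉ t := fun h => h0 ((Finset.mem_powersetCard.mp ht).1 h)
    simpa [hs0, ht0] using congrArg (Finset.erase · 0) hst
  · rw [Finset.disjoint_left]
    intro s hs hs'
    obtain ⟨t, -, rfl⟩ := Finset.mem_image.mp hs'
    exact h0 ((Finset.mem_powersetCard.mp hs).1 (Finset.mem_insert_self _ _))

theorem Finset.orderEmbOfFin_map_succEmb {m k : ℕ} (s : Finset (Fin m)) (h : s.card = k)
    (h' : (s.map (Fin.succEmb m)).card = k) :
    ⇑((s.map (Fin.succEmb m)).orderEmbOfFin h') = Fin.succ ∘ s.orderEmbOfFin h :=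
  (Finset.orderEmbOfFin_unique h' (fun j => Finset.mem_map_of_mem _ (s.orderEmbOfFin_mem h j))
    (Fin.strictMono_succ.comp (s.orderEmbOfFin h).strictMono)).symm

theorem Finset.orderEmbOfFin_insert_zero_map_succEmb {m k : ℕ} (s : Finset (Fin m))
    (h : s.card = k) (h' : (insert 0 (s.map (Fin.succEmb m))).card = k + 1) :
    ⇑((insert 0 (s.map (Fin.succEmb m))).orderEmbOfFin h') =
      Fin.cons 0 (Fin.succ ∘ s.orderEmbOfFin h) := by
  refine (Finset.orderEmbOfFin_unique h'
    (Fin.cases (by simp) fun j => by simp [s.orderEmbOfFin_mem h j]) ?_).symm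
  exact Fin.strictMono_cons.mpr
    ⟨fun j => Fin.succ_pos _, Fin.strictMono_succ.comp (s.orderEmbOfFin h).strictMono⟩

noncomputable def minorDet {m n : ℕ} (v : Fin m → Fin n → ℝ) (s : Finset (Fin m)) : ℝ :=
  if h : s.card = n then (Pi.basisFun ℝ (Fin n)).det (v ∘ s.orderEmbOfFin h) else 0

noncomputable def minorSum {m n : ℕ} (v : Fin m → Fin n → ℝ) : ℝ≥0∞ :=
  ∑ s ∈ powersetCard n univ, ENNReal.ofReal |minorDet v s|

section Minors

variable {m n : ℕ}

theorem minorDet_of_card_eq (v : Fin m → Fin n → ℝ) {s : Finset (Fin m)} (h : s.card = n) :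
    minorDet v s = (Pi.basisFun ℝ (Fin n)).det (v ∘ s.orderEmbOfFin h) :=
  dif_pos h

theorem minorDet_comp_linearMap (L : (Fin n → ℝ) →ₗ[ℝ] Fin n → ℝ) (v : Fin m → Fin n → ℝ)
    (s : Finset (Fin m)) : minorDet (L ∘ v) s = LinearMap.det L * minorDet v s := by
  by_cases h : s.card = n
  · rw [minorDet_of_card_eq _ h, minorDet_of_card_eq _ h, Function.comp_assoc,
      Module.Basis.det_comp]
  · simp [minorDet, h]

theorem minorSum_comp_linearMap (L : (Fin n → ℝ) →ₗ[ℝ] Fin n → ℝ) (v : Fin m → Fin n → ℝ) :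
    minorSum (L ∘ v) = ENNReal.ofReal |LinearMap.det L| * minorSum v := by
  simp only [minorSum, Finset.mul_sum, minorDet_comp_linearMap, abs_mul,
    ENNReal.ofReal_mul (abs_nonneg _)]

theorem minorDet_cons_map_succEmb (w : Fin n → ℝ) (u : Fin m → Fin n → ℝ)
    (s : Finset (Fin m)) : minorDet (Fin.cons w u) (s.map (Fin.succEmb m)) = minorDet u s := by
  by_cases h : s.card = n
  · have h' : (s.map (Fin.succEmb m)).card = n := by rw [Finset.card_map, h]
    rw [minorDet_of_card_eq _ h, minorDet_of_card_eq _ h', s.orderEmbOfFin_map_succEmb h h',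
      ← Function.comp_assoc, Fin.cons_comp_succ]
  · simp [minorDet, h]

theorem minorDet_cons_insert_zero (w : Fin (n + 1) → ℝ) (u : Fin m → Fin (n + 1) → ℝ)
    {t : Finset (Fin m)} (h : t.card = n) :
    minorDet (Fin.cons w u) (insert 0 (t.map (Fin.succEmb m))) =
      (Pi.basisFun ℝ (Fin (n + 1))).det (Fin.cons w (u ∘ t.orderEmbOfFin h)) := by
  have h' : (insert 0 (t.map (Fin.succEmb m))).card = n + 1 := by
    rw [Finset.card_insert_of_notMem (by simp [Fin.succ_ne_zero]), Finset.card_map, h]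
  rw [minorDet_of_card_eq _ h', t.orderEmbOfFin_insert_zero_map_succEmb h h', Fin.comp_cons]
  rfl

theorem minorSum_cons (w : Fin (n + 1) → ℝ) (u : Fin m → Fin (n + 1) → ℝ) :
    minorSum (Fin.cons w u) = minorSum u + ∑ t ∈ powersetCard n univ,
      ENNReal.ofReal |minorDet (Fin.cons w u) (insert 0 (t.map (Fin.succEmb m)))| := by
  simp only [minorSum, Finset.sum_powersetCard_univ_fin_succ, minorDet_cons_map_succEmb]

theorem det_cons_single_zero (x : Fin n → Fin (n + 1) → ℝ) :
    (Pi.basisFun ℝ (Fin (n + 1))).det (Fin.cons (Pi.single 0 1) x) =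
      (Pi.basisFun ℝ (Fin n)).det fun j => Fin.tail (x j) := by
  rw [Module.Basis.det_apply, Module.Basis.det_apply, Matrix.det_succ_column_zero,
    Fin.sum_univ_succ, Finset.sum_eq_zero fun i _ => ?_]
  · simp only [Module.Basis.toMatrix_apply, Matrix.submatrix, Pi.basisFun_repr, Fin.cons_zero,
      Fin.cons_succ, Fin.zero_succAbove, Pi.single_eq_same, Fin.val_zero, pow_zero, one_mul,
      mul_one, add_zero]
    rfl
  · simp [Module.Basis.toMatrix_apply]

theorem minorSum_cons_zero (u : Fin m → Fin (n + 1) → ℝ) :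
    minorSum (Fin.cons 0 u) = minorSum u := by
  rw [minorSum_cons, Finset.sum_eq_zero fun t ht => ?_, add_zero]
  rw [minorDet_cons_insert_zero _ _ (Finset.mem_powersetCard_univ.mp ht),
    AlternatingMap.map_coord_zero _ 0 (Fin.cons_zero _ _)]
  simp

theorem minorSum_cons_single_zero (u : Fin m → Fin (n + 1) → ℝ) :
    minorSum (Fin.cons (Pi.single 0 1) u) = minorSum u + minorSum fun i => Fin.tail (u i) := by
  rw [minorSum_cons, minorSum]
  refine congrArg _ (Finset.sum_congr rfl fun t ht => ?_)
  have h := Finset.mem_powersetCard_univ.mp ht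
  rw [minorDet_cons_insert_zero _ _ h, det_cons_single_zero, minorDet_of_card_eq _ h]
  rfl

end Minors

theorem Real.volume_add_Icc_zero_one {K : Set ℝ} (hK : IsCompact K) (hconv : Convex ℝ K)
    (hne : K.Nonempty) : volume (K + Icc 0 1) = volume K + 1 := by
  obtain ⟨a, b, rfl⟩ : ∃ a b, K = Icc a b :=
    ⟨_, _, eq_Icc_of_connected_compact ⟨hne, hconv.isPreconnected⟩ hK⟩
  have hab : a ≤ b := nonempty_Icc.mp hne
  have hsum : Icc a b + Icc 0 1 = Icc a (b + 1) := by
    refine (Icc_add_Icc_subset a b 0 1).trans_eq (by rw [add_zero]) |>.antisymm fun x hx => ?_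
    exact ⟨min x b, ⟨le_min hx.1 hab, min_le_right x b⟩, x - min x b,
      ⟨sub_nonneg.mpr (min_le_left x b), by grind⟩, add_sub_cancel _ _⟩
  rw [hsum, Real.volume_Icc, Real.volume_Icc, add_sub_right_comm,
    ENNReal.ofReal_add (sub_nonneg.mpr hab) zero_le_one, ENNReal.ofReal_one]

theorem Fin.smul_single_zero_add_cons {n : ℕ} (s t : ℝ) (y : Fin n → ℝ) :
    s • (Pi.single 0 1 : Fin (n + 1) → ℝ) + Fin.cons t y = Fin.cons (s + t) y := by
  ext i
  cases i using Fin.cases <;> simp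

section Slices

variable {n : ℕ}

theorem volume_eq_lintegral_volume_slice {S : Set (Fin (n + 1) → ℝ)} (hS : MeasurableSet S) :
    volume S = ∫⁻ y : Fin n → ℝ, volume {t : ℝ | Fin.cons t y ∈ S} := by
  have he := (volume_preserving_piFinSuccAbove (fun _ : Fin (n + 1) => ℝ) 0).symm
  rw [← he.measure_preimage hS.nullMeasurableSet, Measure.volume_eq_prod,
    Measure.prod_apply_symm (he.measurable hS)]
  simp only [MeasurableEquiv.piFinSuccAbove_symm_apply, Fin.insertNthEquiv, Fin.insertNth_zero',
    Equiv.coe_fn_mk]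
  rfl

theorem slice_segment_single_zero_add (A : Set (Fin (n + 1) → ℝ)) (y : Fin n → ℝ) :
    {t : ℝ | Fin.cons t y ∈ segment ℝ 0 (Pi.single 0 1) + A} =
      {t : ℝ | Fin.cons t y ∈ A} + Icc 0 1 := by
  ext t
  simp only [mem_ofPred_eq, mem_add, segment_eq_image', zero_add, sub_zero, mem_image]
  constructor
  · rintro ⟨_, ⟨s, hs, rfl⟩, a, ha, hsa⟩
    have : a = Fin.cons (t - s) y := by
      rw [← add_right_inj (s • Pi.single 0 1), hsa, Fin.smul_single_zero_add_cons, add_sub_cancel]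
    exact ⟨t - s, this ▸ ha, s, hs, sub_add_cancel t s⟩
  · rintro ⟨r, hr, s, hs, rfl⟩
    exact ⟨_, ⟨s, hs, rfl⟩, _, hr, by rw [Fin.smul_single_zero_add_cons, add_comm s r]⟩

theorem slice_nonempty_iff (A : Set (Fin (n + 1) → ℝ)) (y : Fin n → ℝ) :
    {t : ℝ | Fin.cons t y ∈ A}.Nonempty ↔ y ∈ Fin.tail '' A := by
  refine ⟨fun ⟨t, ht⟩ => ⟨_, ht, Fin.tail_cons _ _⟩, ?_⟩
  rintro ⟨x, hx, rfl⟩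
  exact ⟨x 0, by rwa [mem_ofPred_eq, Fin.cons_self_tail]⟩

theorem volume_slice_segment_single_zero_add {A : Set (Fin (n + 1) → ℝ)} (hA : IsCompact A)
    (hconv : Convex ℝ A) (y : Fin n → ℝ) :
    volume {t : ℝ | Fin.cons t y ∈ segment ℝ 0 (Pi.single 0 1) + A} =
      volume {t : ℝ | Fin.cons t y ∈ A} + (Fin.tail '' A).indicator 1 y := by
  rw [slice_segment_single_zero_add]
  by_cases hy : {t : ℝ | Fin.cons t y ∈ A}.Nonempty
  · have hcompact : IsCompact {t : ℝ | Fin.cons t y ∈ A} :=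
      (hA.image (continuous_apply 0)).of_isClosed_subset
        (hA.isClosed.preimage (continuous_id.finCons continuous_const)) fun t ht => ⟨_, ht, rfl⟩
    have hconvex : Convex ℝ {t : ℝ | Fin.cons t y ∈ A} := by
      have : {t : ℝ | Fin.cons t y ∈ A} =
          LinearMap.toSpanSingleton ℝ _ (Pi.single 0 1) ⁻¹' ((Fin.cons 0 y + ·) ⁻¹' A) := by
        ext t
        simp [add_comm _ (t • _), Fin.smul_single_zero_add_cons]
      rw [this]
      exact (hconv.translate_preimage_right _).linear_preimage _
    rw [Real.volume_add_Icc_zero_one hcompact hconvex hy,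
      indicator_of_mem ((slice_nonempty_iff A y).mp hy), Pi.one_apply]
  · rw [not_nonempty_iff_eq_empty.mp hy, empty_add,
      indicator_of_notMem (mt (slice_nonempty_iff A y).mpr hy), measure_empty, add_zero]

/-- Each nonempty slice of `A` along the first coordinate, an interval, grows by length `1`. -/
theorem volume_segment_single_zero_add {A : Set (Fin (n + 1) → ℝ)} (hA : IsCompact A)
    (hconv : Convex ℝ A) :
    volume (segment ℝ 0 (Pi.single 0 1) + A) = volume A + volume (Fin.tail '' A) := by
  have hsegment : IsCompact (segment ℝ 0 (Pi.single 0 1 : Fin (n + 1) → ℝ)) := by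
    rw [← convexHull_pair (𝕜 := ℝ)]
    exact (toFinite _).isCompact_convexHull ℝ
  have htail : MeasurableSet (Fin.tail '' A) :=
    (hA.image (continuous_pi fun i : Fin n => continuous_apply i.succ)).isClosed.measurableSet
  rw [volume_eq_lintegral_volume_slice (hsegment.add hA).isClosed.measurableSet,
    lintegral_congr (volume_slice_segment_single_zero_add hA hconv),
    lintegral_add_right _ (measurable_one.indicator htail), lintegral_indicator_one htail,
    ← volume_eq_lintegral_volume_slice hA.isClosed.measurableSet]

end Slices

theorem isCompact_parallelepiped {ι E : Type*} [Fintype ι] [AddCommGroup E] [Module ℝ E]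
    [TopologicalSpace E] [ContinuousAdd E] [ContinuousSMul ℝ E] (v : ι → E) :
    IsCompact (parallelepiped v) :=
  isCompact_Icc.image (by fun_prop)

theorem parallelepiped_cons {E : Type*} [AddCommGroup E] [Module ℝ E] {m : ℕ} (w : E)
    (u : Fin m → E) : parallelepiped (Fin.cons w u) = segment ℝ 0 w + parallelepiped u := by
  simp only [parallelepiped_eq_sum_segment, Fin.sum_univ_succ, Fin.cons_zero, Fin.cons_succ]

theorem MeasureTheory.Measure.addHaar_parallelepiped_comp {ι E : Type*} [Fintype ι] [NormedAddCommGroup E]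
    [NormedSpace ℝ E] [MeasurableSpace E] [BorelSpace E] [FiniteDimensional ℝ E] (μ : Measure E)
    [μ.IsAddHaarMeasure] (L : E →ₗ[ℝ] E) (v : ι → E) :
    μ (parallelepiped (L ∘ v)) = ENNReal.ofReal |LinearMap.det L| * μ (parallelepiped v) := by
  rw [← image_parallelepiped, Measure.addHaar_image_linearMap]

section Volume

variable {m n : ℕ}

theorem volume_parallelepiped_of_dim_zero (v : Fin m → Fin 0 → ℝ) :
    volume (parallelepiped v) = minorSum v := by
  have : parallelepiped v = univ :=
    eq_univ_of_forall fun x => ⟨0, ⟨le_rfl, zero_le_one⟩, Subsingleton.elim _ _⟩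
  rw [this, volume_pi, Measure.pi_univ]
  simp [minorSum, minorDet, Module.Basis.det_isEmpty]

theorem volume_parallelepiped_of_isEmpty (v : Fin 0 → Fin (n + 1) → ℝ) :
    volume (parallelepiped v) = minorSum v := by
  rw [parallelepiped_eq_sum_segment, Finset.univ_eq_empty, Finset.sum_empty, ← singleton_zero,
    measure_singleton, minorSum, Finset.powersetCard_eq_empty.mpr (by simp), Finset.sum_empty]

theorem volume_parallelepiped_cons_single_zero (u : Fin m → Fin (n + 1) → ℝ)
    (hu : volume (parallelepiped u) = minorSum u)
    (htail : volume (parallelepiped fun i => Fin.tail (u i)) = minorSum fun i => Fin.tail (u i)) :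
    volume (parallelepiped (Fin.cons (Pi.single 0 1) u)) =
      minorSum (Fin.cons (Pi.single 0 1) u) := by
  have htail_image : Fin.tail '' parallelepiped u = parallelepiped fun i => Fin.tail (u i) :=
    image_parallelepiped (LinearMap.funLeft ℝ ℝ Fin.succ) u
  rw [parallelepiped_cons, volume_segment_single_zero_add (isCompact_parallelepiped u)
    (convex_parallelepiped u), hu, htail_image, htail, minorSum_cons_single_zero]

theorem volume_parallelepiped_eq_minorSum :
    ∀ {m n : ℕ} (v : Fin m → Fin n → ℝ), volume (parallelepiped v) = minorSum v
  | _, 0, v => volume_parallelepiped_of_dim_zero v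
  | 0, _ + 1, v => volume_parallelepiped_of_isEmpty v
  | m + 1, n + 1, v => by
    rw [← Fin.cons_self_tail v]
    obtain hw | hw := eq_or_ne (v 0) 0
    · rw [hw, parallelepiped_cons, segment_same, singleton_zero, zero_add, minorSum_cons_zero]
      exact volume_parallelepiped_eq_minorSum _
    obtain ⟨T, hT⟩ := SeparatingDual.exists_continuousLinearEquiv_apply_eq (R := ℝ) hw
      (Pi.single_ne_zero_iff.mpr one_ne_zero : (Pi.single 0 1 : Fin (n + 1) → ℝ) ≠ 0)
    set L : (Fin (n + 1) → ℝ) →ₗ[ℝ] Fin (n + 1) → ℝ := T.toLinearEquiv.toLinearMap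
    have hL : L (v 0) = Pi.single 0 1 := hT
    have hdet : ENNReal.ofReal |LinearMap.det L| ≠ 0 := by
      simpa using (LinearEquiv.isUnit_det' T.toLinearEquiv).ne_zero
    rw [← ENNReal.mul_right_inj hdet ENNReal.ofReal_ne_top, ← Measure.addHaar_parallelepiped_comp,
      ← minorSum_comp_linearMap, Fin.comp_cons, hL]
    exact volume_parallelepiped_cons_single_zero _ (volume_parallelepiped_eq_minorSum _)
      (volume_parallelepiped_eq_minorSum _)

end Volume

theorem zonotope_volume_general (n m : ℕ)
    (Z : Matrix (Fin n) (Fin m) ℝ) :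
    MeasureTheory.volume
        {x : Fin n → ℝ | ∃ c : Fin m → ℝ, (∀ i, c i ∈ Set.Icc (0 : ℝ) 1) ∧
          x = fun q => ∑ i : Fin m, c i * Z q i} =
      ENNReal.ofReal
        (∑ s ∈ ((Finset.univ : Finset (Fin m)).powersetCard n).attach,
          |Matrix.det (Matrix.of fun i j : Fin n =>
            Z i ((s.1.orderIsoOfFin (Finset.mem_powersetCard.mp s.2).2 j : Fin m)))|) := by
  have hset : {x : Fin n → ℝ | ∃ c : Fin m → ℝ, (∀ i, c i ∈ Set.Icc (0 : ℝ) 1) ∧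
      x = fun q => ∑ i : Fin m, c i * Z q i} = parallelepiped fun i q => Z q i := by
    ext x
    simp only [mem_ofPred_eq, mem_parallelepiped_iff, mem_Icc, Pi.le_def, ← forall_and,
      funext_iff, Finset.sum_apply, Pi.smul_apply, smul_eq_mul, Pi.zero_apply, Pi.one_apply]
  have hminor (s : Finset (Fin m)) (h : s.card = n) : minorDet (fun i q => Z q i) s =
      (Matrix.of fun i j : Fin n => Z i (s.orderIsoOfFin h j : Fin m)).det := by
    rw [minorDet_of_card_eq _ h, Module.Basis.det_apply]
    rfl
  rw [hset, volume_parallelepiped_eq_minorSum, minorSum, ← Finset.sum_attach,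
    ENNReal.ofReal_sum_of_nonneg fun _ _ => abs_nonneg _]
  exact Finset.sum_congr rfl fun s _ => by rw [hminor _ (Finset.mem_powersetCard.mp s.2).2]

/-- For a full row rank `Z ∈ ℝ^{n×m}`, the volume of the zonotope
`C(Z) = {∑ cᵢ zᵢ : cᵢ ∈ [0,1]}` equals the sum, over all `n`-element subsets of
the columns, of the absolute values of the corresponding `n×n` determinants. -/
theorem zonotope_volume (n m : ℕ) (hnm : n ≤ m)
    (Z : Matrix (Fin n) (Fin m) ℝ) (hrank : Z.rank = n) :
    MeasureTheory.volume
        {x : Fin n → ℝ | ∃ c : Fin m → ℝ, (∀ i, c i ∈ Set.Icc (0 : ℝ) 1) ∧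
          x = fun q => ∑ i : Fin m, c i * Z q i} =
      ENNReal.ofReal
        (∑ s ∈ ((Finset.univ : Finset (Fin m)).powersetCard n).attach,
          |Matrix.det (Matrix.of fun i j : Fin n =>
            Z i ((s.1.orderIsoOfFin (Finset.mem_powersetCard.mp s.2).2 j : Fin m)))|) :=
  zonotope_volume_general n m Z
end

section
/- The finite-time volume factor satisfies the recursion V_N^{λ₁⋯λₙ} = V_{N−1}^{λ₁⋯λₙ} + ∑_{j=1}^n (−1)^{n+j} λⱼ^{N−1} V_{N−1}^{λ₁⋯λₙ∖λⱼ} for N > n, where V_N of a tuple is the sum over strictly increasing index tuples from {0,…,N−1} of the corresponding generalized Vandermonde determinants. -/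
/-- The finite-time volume factor `V_N^{λ₁⋯λₙ}`: the sum, over all strictly
increasing `n`-tuples `(i₁ < ⋯ < iₙ)` of exponents from `{0,…,N-1}`, of the
generalized Vandermonde determinants `det [λᵣ^{i_s}]`. -/
noncomputable def Vfun (n N : ℕ) (l : Fin n → ℝ) : ℝ :=
  ∑ s ∈ ((Finset.range N).powersetCard n).attach,
    Matrix.det (Matrix.of fun r c : Fin n =>
      l r ^ ((s.1.orderIsoOfFin (Finset.mem_powersetCard.mp s.2).2 c : ℕ)))

/-- Proof-free version of the Vandermonde determinant of a subset. -/
noncomputable def Dfun (n : ℕ) (l : Fin n → ℝ) (s : Finset ℕ) : ℝ :=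
  if h : s.card = n then
    Matrix.det (Matrix.of fun r c : Fin n => l r ^ (s.orderEmbOfFin h c : ℕ))
  else 0

lemma Vfun_eq_sum_D (n N : ℕ) (l : Fin n → ℝ) :
    Vfun n N l = ∑ s ∈ (Finset.range N).powersetCard n, Dfun n l s := by
  rw [Vfun, ← Finset.sum_attach ((Finset.range N).powersetCard n) (Dfun n l)]
  refine Finset.sum_congr rfl fun s _ => ?_
  have h : s.1.card = n := (Finset.mem_powersetCard.mp s.2).2
  rw [Dfun, dif_pos h]
  exact congrArg Matrix.det rfl

lemma Dfun_insert (n M : ℕ) (l : Fin (n + 1) → ℝ) (t : Finset ℕ)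
    (ht : t ⊆ Finset.range M) (hc : t.card = n) :
    Dfun (n + 1) l (insert M t) = ∑ j : Fin (n + 1),
      (-1 : ℝ) ^ ((n + 1) + ((j : ℕ) + 1)) * l j ^ M * Dfun n (l ∘ j.succAbove) t := by
  have hMt : M ∉ t := fun h => absurd (ht h) (by simp)
  have hcard : (insert M t).card = n + 1 := by
    rw [Finset.card_insert_of_notMem hMt, hc]
  have hlt : ∀ i : Fin n, t.orderEmbOfFin hc i < M := fun i =>
    Finset.mem_range.mp (ht (Finset.orderEmbOfFin_mem t hc i))
  have hsnoc : (Fin.snoc (fun i => t.orderEmbOfFin hc i) M : Fin (n + 1) → ℕ)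
      = ⇑((insert M t).orderEmbOfFin hcard) := by
    apply Finset.orderEmbOfFin_unique
    · intro c
      induction c using Fin.lastCases with
      | last => simp
      | cast i => simp [Finset.orderEmbOfFin_mem t hc i]
    · intro a b hab
      induction b using Fin.lastCases with
      | last =>
        obtain ⟨a', rfl⟩ := Fin.exists_castSucc_eq.mpr (Fin.ne_last_of_lt hab)
        simpa using hlt a'
      | cast j =>
        obtain ⟨a', rfl⟩ := Fin.exists_castSucc_eq.mpr
          (Fin.ne_last_of_lt (hab.trans (Fin.castSucc_lt_last j)))
        simp only [Fin.snoc_castSucc]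
        exact (t.orderEmbOfFin hc).strictMono (Fin.castSucc_lt_castSucc_iff.mp hab)
  rw [Dfun, dif_pos hcard]
  rw [show (Matrix.of fun r c : Fin (n + 1) => l r ^ ((insert M t).orderEmbOfFin hcard c : ℕ))
      = Matrix.of fun r c : Fin (n + 1) =>
          l r ^ ((Fin.snoc (fun i => t.orderEmbOfFin hc i) M : Fin (n + 1) → ℕ) c) by
    rw [hsnoc]]
  rw [Matrix.det_succ_column _ (Fin.last n)]
  refine Finset.sum_congr rfl fun i _ => ?_
  have hsign : ((n + 1) + ((i : ℕ) + 1)) = ((i : ℕ) + n) + 2 := by omega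
  have hsub : ((Matrix.of fun r c : Fin (n + 1) =>
      l r ^ ((Fin.snoc (fun i => t.orderEmbOfFin hc i) M : Fin (n + 1) → ℕ) c)).submatrix
      i.succAbove (Fin.last n).succAbove)
      = Matrix.of fun r c : Fin n => (l ∘ i.succAbove) r ^ (t.orderEmbOfFin hc c : ℕ) := by
    ext r c
    simp [Fin.succAbove_last]
  rw [hsub, Dfun, dif_pos hc]
  simp only [Matrix.of_apply, Fin.snoc_last, Fin.val_last, hsign, pow_add, neg_one_sq]
  ring

/-- The recursion `V_N = V_{N-1} + ∑ⱼ (-1)^{n+j} λⱼ^{N-1} V_{N-1}^{∖j}` for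
`N > n`, where the tuple has length `n+1` (Lean indexing) and `j` is the
1-based position `(j : ℕ) + 1`. -/
theorem Vfun_recursion (n N : ℕ) (l : Fin (n + 1) → ℝ) (hN : n + 1 < N) :
    Vfun (n + 1) N l =
      Vfun (n + 1) (N - 1) l +
        ∑ j : Fin (n + 1), (-1 : ℝ) ^ ((n + 1) + ((j : ℕ) + 1)) *
          l j ^ (N - 1) * Vfun n (N - 1) (l ∘ j.succAbove) := by
  obtain ⟨M, rfl⟩ : ∃ M, N = M + 1 := ⟨N - 1, by omega⟩
  simp only [Nat.add_sub_cancel, Vfun_eq_sum_D]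
  have hM : M ∉ Finset.range M := by simp
  have hdisj : Disjoint ((Finset.range M).powersetCard (n + 1))
      (((Finset.range M).powersetCard n).image (insert M)) := by
    rw [Finset.disjoint_left]
    intro s hs hs'
    obtain ⟨t, _, rfl⟩ := Finset.mem_image.mp hs'
    exact hM ((Finset.mem_powersetCard.mp hs).1 (Finset.mem_insert_self M t))
  have hinj : ∀ t1 ∈ (Finset.range M).powersetCard n,
      ∀ t2 ∈ (Finset.range M).powersetCard n, insert M t1 = insert M t2 → t1 = t2 := by
    intro t1 h1 t2 h2 h
    have hM1 : M ∉ t1 := fun hx => hM ((Finset.mem_powersetCard.mp h1).1 hx)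
    have hM2 : M ∉ t2 := fun hx => hM ((Finset.mem_powersetCard.mp h2).1 hx)
    rw [← Finset.erase_insert hM1, ← Finset.erase_insert hM2, h]
  rw [Finset.range_add_one, Finset.powersetCard_succ_insert hM,
      Finset.sum_union hdisj, Finset.sum_image hinj]
  congr 1
  rw [Finset.sum_congr rfl fun t htm => Dfun_insert n M l t
      (Finset.mem_powersetCard.mp htm).1 (Finset.mem_powersetCard.mp htm).2,
    Finset.sum_comm]
  simp only [← Finset.mul_sum]
end

section
/- (Base case N = n of the main theorem) For pairwise distinct λ₁,…,λₙ with λᵢ ≠ 1 and λᵢλⱼ ≠ 1, the alternating sum ∑_{S ⊆ {1,…,n}} (−1)^{(n+1)|S| − ∑_{j∈S} j} (∏_{j∈S} λⱼ^n) Φ_S Φ_{Sᶜ} equals the Vandermonde product ∏_{1 ≤ i < j ≤ n} (λⱼ − λᵢ). -/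
open Finset Matrix Polynomial

namespace MainBaseAux

/-! ### A Chebyshev-like family of monic polynomials -/

noncomputable def pc : ℕ → Polynomial ℝ
  | 0 => 1
  | 1 => Polynomial.X + 1
  | (m+2) => Polynomial.X * pc (m+1) - pc m

lemma pc_spec : ∀ m : ℕ, (pc m).Monic ∧ (pc m).natDegree = m
  | 0 => ⟨monic_one, natDegree_one⟩
  | 1 => by
      constructor
      · simpa [pc] using monic_X_add_C (1:ℝ)
      · simpa [pc] using natDegree_X_add_C (1:ℝ)
  | (m+2) => by
      obtain ⟨m1, d1⟩ := pc_spec (m+1)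
      obtain ⟨m0, d0⟩ := pc_spec m
      have hXm : (Polynomial.X * pc (m+1)).Monic := monic_X.mul m1
      have hXd : (Polynomial.X * pc (m+1)).natDegree = m+2 := by
        rw [monic_X.natDegree_mul m1, natDegree_X, d1]
        omega
      have hdeg : (pc m).degree < (Polynomial.X * pc (m+1)).degree := by
        rw [degree_eq_natDegree m0.ne_zero, degree_eq_natDegree hXm.ne_zero, hXd, d0]
        exact_mod_cast (by omega : m < m + 2)
      constructor
      · show (Polynomial.X * pc (m+1) - pc m).Monic
        exact hXm.sub_of_left hdeg
      · show (Polynomial.X * pc (m+1) - pc m).natDegree = m + 2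
        rw [natDegree_sub_eq_left_of_natDegree_lt (by rw [hXd, d0]; omega), hXd]

lemma pc_eval (x : ℝ) (hx : x ≠ 0) :
    ∀ m : ℕ, x ^ m * (pc m).eval (x + x⁻¹) = ∑ s ∈ Finset.range (2*m+1), x ^ s
  | 0 => by simp [pc]
  | 1 => by
      simp only [pc, eval_add, eval_X, eval_one]
      rw [show 2*1+1 = 3 from rfl]
      rw [Finset.sum_range_succ, Finset.sum_range_succ, Finset.sum_range_one]
      field_simp
      ring
  | (m+2) => by
      have ih1 := pc_eval x hx (m+1)
      have ih0 := pc_eval x hx m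
      simp only [pc, eval_sub, eval_mul, eval_X]
      have expand : x^(m+2) * ((x + x⁻¹) * (pc (m+1)).eval (x+x⁻¹) - (pc m).eval (x+x⁻¹))
          = (x^2+1) * (x^(m+1) * (pc (m+1)).eval (x+x⁻¹))
            - x^2 * (x^m * (pc m).eval (x+x⁻¹)) := by
        field_simp
        ring
      rw [expand, ih1, ih0]
      have hAB : ∑ s ∈ Finset.range (2*(m+1)+1), x^s
          = (∑ s ∈ Finset.range (2*m+1), x^s) + x^(2*m+1) + x^(2*m+2) := by
        rw [show 2*(m+1)+1 = ((2*m+1)+1)+1 from by ring, Finset.sum_range_succ,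
          Finset.sum_range_succ]
      have hAB2 : ∑ s ∈ Finset.range (2*(m+2)+1), x^s
          = (∑ s ∈ Finset.range (2*(m+1)+1), x^s) + x^(2*m+3) + x^(2*m+4) := by
        rw [show 2*(m+2)+1 = ((2*(m+1)+1)+1)+1 from by ring, Finset.sum_range_succ,
          Finset.sum_range_succ]
        ring
      rw [hAB2, hAB]
      ring


/-! ### Product-over-pairs helpers -/

variable {n : ℕ}

lemma prod_swap_pairs (f : Fin n → Fin n → ℝ) :
    ∏ j, ∏ k ∈ Finset.Ioi j, f j k = ∏ k, ∏ j ∈ Finset.Iio k, f j k := by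
  rw [Finset.prod_sigma', Finset.prod_sigma']
  exact Finset.prod_nbij' (fun a => ⟨a.2, a.1⟩) (fun a => ⟨a.2, a.1⟩)
    (by simp) (by simp) (by simp) (by simp) (by simp)

lemma prod_pairs_mem (S : Finset (Fin n)) (f : Fin n → Fin n → ℝ) :
    (∏ j, ∏ k ∈ Finset.Ioi j, if j ∈ S ∧ k ∈ S then f j k else 1)
      = ∏ j ∈ S, ∏ k ∈ S.filter (fun k => j < k), f j k := by
  classical
  have h1 : ∀ j : Fin n, (∏ k ∈ Finset.Ioi j, if j ∈ S ∧ k ∈ S then f j k else 1)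
      = if j ∈ S then ∏ k ∈ S.filter (fun k => j < k), f j k else 1 := by
    intro j
    by_cases hj : j ∈ S
    · simp only [hj, true_and, if_true]
      rw [Finset.prod_ite_mem (Finset.Ioi j) S (fun k => f j k)]
      apply Finset.prod_congr _ (fun _ _ => rfl)
      ext k
      simp [Finset.mem_filter, Finset.mem_Ioi, and_comm]
    · simp [hj]
  rw [Finset.prod_congr rfl (fun j _ => h1 j),
    Finset.prod_ite_mem Finset.univ S _, Finset.univ_inter]

lemma prod_pairs_split_mixed (S : Finset (Fin n)) (f g : Fin n → Fin n → ℝ) :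
    (∏ j, ∏ k ∈ Finset.Ioi j, if (j ∈ S ↔ k ∈ S) then f j k else g j k) =
      (∏ j ∈ S, ∏ k ∈ S.filter (fun k => j < k), f j k) *
      (∏ j ∈ Sᶜ, ∏ k ∈ Sᶜ.filter (fun k => j < k), f j k) *
      (∏ j, ∏ k ∈ Finset.Ioi j, if (j ∈ S ↔ k ∈ S) then 1 else g j k) := by
  classical
  have key : ∀ j k : Fin n, (if (j ∈ S ↔ k ∈ S) then f j k else g j k)
      = ((if j ∈ S ∧ k ∈ S then f j k else 1) * (if j ∈ Sᶜ ∧ k ∈ Sᶜ then f j k else 1)) *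
        (if (j ∈ S ↔ k ∈ S) then 1 else g j k) := by
    intro j k
    by_cases hj : j ∈ S <;> by_cases hk : k ∈ S <;> simp [hj, hk]
  calc (∏ j, ∏ k ∈ Finset.Ioi j, if (j ∈ S ↔ k ∈ S) then f j k else g j k)
      = ∏ j, ∏ k ∈ Finset.Ioi j,
          (((if j ∈ S ∧ k ∈ S then f j k else 1) * (if j ∈ Sᶜ ∧ k ∈ Sᶜ then f j k else 1)) *
            (if (j ∈ S ↔ k ∈ S) then 1 else g j k)) :=
        Finset.prod_congr rfl fun j _ => Finset.prod_congr rfl fun k _ => key j k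
    _ = _ := by
        simp only [Finset.prod_mul_distrib]
        rw [prod_pairs_mem S f, prod_pairs_mem Sᶜ f]


/-! ### The cleared identity, for nonvanishing coordinates -/

lemma stepA (n : ℕ) (x : Fin n → ℝ) (hx : ∀ j, x j ≠ 0) :
    ∑ S : Finset (Fin n),
        (-1 : ℝ) ^ ((((n : ℤ) + 1) * (S.card : ℤ)) - ∑ j ∈ S, ((j : ℤ) + 1)) *
          (∏ j ∈ S, x j ^ n) *
          ((∏ j ∈ S, ∏ k ∈ S.filter (fun k => j < k), (x k - x j)) *
           (∏ j ∈ Sᶜ, ∏ k ∈ Sᶜ.filter (fun k => j < k), (x k - x j)) *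
           (∏ j, ∏ k ∈ Finset.Ioi j, if (j ∈ S ↔ k ∈ S) then (1:ℝ) else 1 - x j * x k)) =
      (∏ i, (1 - x i)) * ((∏ i, ∏ j ∈ Finset.Ioi i, (x j - x i)) *
        (∏ i, ∏ j ∈ Finset.Ioi i, (1 - x i * x j))) := by
  classical
  set σ : ℝ := ∏ j : Fin n, (-1:ℝ) ^ (Finset.Ioi j).card with hσdef
  have hσ2 : σ * σ = 1 := by
    rw [hσdef, ← Finset.prod_mul_distrib]
    apply Finset.prod_eq_one
    intro j _
    rw [← pow_add]
    exact Even.neg_one_pow ⟨(Finset.Ioi j).card, rfl⟩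
  set t : Fin n → ℝ := fun j => x j + (x j)⁻¹ with htdef
  set afun : Fin n → (Fin n → ℝ) := fun j => fun i => x j ^ (n - 1 - (i:ℕ)) with hadef
  set bfun : Fin n → (Fin n → ℝ) := fun j => fun i => -(x j ^ (n + (i:ℕ))) with hbdef
  -- Part I : each summand equals σ times a determinant
  have termEq : ∀ S : Finset (Fin n),
      (-1 : ℝ) ^ ((((n : ℤ) + 1) * (S.card : ℤ)) - ∑ j ∈ S, ((j : ℤ) + 1)) *
          (∏ j ∈ S, x j ^ n) *
          ((∏ j ∈ S, ∏ k ∈ S.filter (fun k => j < k), (x k - x j)) *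
           (∏ j ∈ Sᶜ, ∏ k ∈ Sᶜ.filter (fun k => j < k), (x k - x j)) *
           (∏ j, ∏ k ∈ Finset.Ioi j, if (j ∈ S ↔ k ∈ S) then (1:ℝ) else 1 - x j * x k))
        = σ * Matrix.detRowAlternating (S.piecewise bfun afun) := by
    intro S
    set y : Fin n → ℝ := fun j => if j ∈ S then x j else (x j)⁻¹ with hydef
    set c : Fin n → ℝ := fun j => if j ∈ S then -(x j ^ n) else x j ^ (n-1) with hcdef
    have hpiece : S.piecewise bfun afun
        = fun (j : Fin n) (i : Fin n) => c j * Matrix.vandermonde y j i := by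
      funext j i
      by_cases hj : j ∈ S
      · rw [Finset.piecewise_eq_of_mem _ _ _ hj]
        simp only [hbdef, hcdef, hydef, hj, if_true, Matrix.vandermonde_apply]
        rw [neg_mul, ← pow_add]
      · rw [Finset.piecewise_eq_of_notMem _ _ _ hj]
        simp only [hadef, hcdef, hydef, hj, if_false, Matrix.vandermonde_apply]
        rw [inv_pow]
        exact pow_sub₀ (x j) (hx j) (by have := i.isLt; omega)
    have hdetS : Matrix.detRowAlternating (S.piecewise bfun afun)
        = (∏ j, c j) * ∏ j, ∏ k ∈ Finset.Ioi j, (y k - y j) := by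
      rw [hpiece]
      have h1 : Matrix.detRowAlternating
            (fun (j : Fin n) (i : Fin n) => c j * Matrix.vandermonde y j i)
          = (Matrix.of fun (j : Fin n) (i : Fin n) => c j * Matrix.vandermonde y j i).det := rfl
      rw [h1, Matrix.det_mul_column c (Matrix.vandermonde y), Matrix.det_vandermonde]
    have pairEq : ∀ j k : Fin n, y k - y j =
        ((if j ∈ S then (1:ℝ) else -1) *
          (if (j ∈ S ↔ k ∈ S) then x k - x j else 1 - x j * x k)) *
        ((if j ∈ S then (1:ℝ) else (x j)⁻¹) * (if k ∈ S then (1:ℝ) else (x k)⁻¹)) := by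
      intro j k
      have hj' := hx j
      have hk' := hx k
      by_cases hj : j ∈ S <;> by_cases hk : k ∈ S <;>
        [skip; skip; skip; skip] <;> (simp only [hydef, hj, hk]; norm_num) <;>
        (try field_simp) <;> (try ring) <;> (try tauto)
    have prodY : (∏ j, ∏ k ∈ Finset.Ioi j, (y k - y j)) =
        ((∏ j : Fin n, (if j ∈ S then (1:ℝ) else -1) ^ (Finset.Ioi j).card) *
         ((∏ j ∈ S, ∏ k ∈ S.filter (fun k => j < k), (x k - x j)) *
          (∏ j ∈ Sᶜ, ∏ k ∈ Sᶜ.filter (fun k => j < k), (x k - x j)) *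
          (∏ j, ∏ k ∈ Finset.Ioi j, if (j ∈ S ↔ k ∈ S) then (1:ℝ) else 1 - x j * x k))) *
        ((∏ j : Fin n, (if j ∈ S then (1:ℝ) else (x j)⁻¹) ^ (Finset.Ioi j).card) *
         (∏ k : Fin n, (if k ∈ S then (1:ℝ) else (x k)⁻¹) ^ (Finset.Iio k).card)) := by
      calc (∏ j, ∏ k ∈ Finset.Ioi j, (y k - y j))
          = ∏ j, ∏ k ∈ Finset.Ioi j,
              (((if j ∈ S then (1:ℝ) else -1) *
                (if (j ∈ S ↔ k ∈ S) then x k - x j else 1 - x j * x k)) *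
               ((if j ∈ S then (1:ℝ) else (x j)⁻¹) * (if k ∈ S then (1:ℝ) else (x k)⁻¹))) :=
            Finset.prod_congr rfl fun j _ => Finset.prod_congr rfl fun k _ => pairEq j k
        _ = ((∏ j : Fin n, ∏ k ∈ Finset.Ioi j, (if j ∈ S then (1:ℝ) else -1)) *
             (∏ j : Fin n, ∏ k ∈ Finset.Ioi j,
                (if (j ∈ S ↔ k ∈ S) then x k - x j else 1 - x j * x k))) *
            ((∏ j : Fin n, ∏ k ∈ Finset.Ioi j, (if j ∈ S then (1:ℝ) else (x j)⁻¹)) *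
             (∏ j : Fin n, ∏ k ∈ Finset.Ioi j, (if k ∈ S then (1:ℝ) else (x k)⁻¹))) := by
            simp only [Finset.prod_mul_distrib]
        _ = _ := by
            rw [prod_pairs_split_mixed S (fun j k => x k - x j) (fun j k => 1 - x j * x k),
              prod_swap_pairs (fun j k => if k ∈ S then (1:ℝ) else (x k)⁻¹)]
            simp only [Finset.prod_const]
    have hcast : ((((n : ℤ) + 1) * (S.card : ℤ)) - ∑ j ∈ S, ((j : ℤ) + 1))
        = ((∑ j ∈ S, ((Finset.Ioi j).card + 1) : ℕ) : ℤ) := by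
      rw [Nat.cast_sum]
      rw [Finset.sum_congr rfl (fun j (hj : j ∈ S) =>
        (show ((((Finset.Ioi j).card + 1 : ℕ)) : ℤ) = (n : ℤ) - (j : ℤ) by
          rw [Fin.card_Ioi]; have := j.isLt; omega))]
      rw [Finset.sum_sub_distrib, Finset.sum_const, Finset.sum_add_distrib, Finset.sum_const]
      push_cast
      ring
    have hF : ∀ j : Fin n,
        (if j ∈ S then (-1:ℝ) ^ ((Finset.Ioi j).card + 1) * x j ^ n else 1)
          = (-1:ℝ) ^ (Finset.Ioi j).card * (c j *
              ((if j ∈ S then (1:ℝ) else -1) ^ (Finset.Ioi j).card *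
               ((if j ∈ S then (1:ℝ) else (x j)⁻¹) ^ (Finset.Ioi j).card *
                (if j ∈ S then (1:ℝ) else (x j)⁻¹) ^ (Finset.Iio j).card))) := by
      intro j
      by_cases hj : j ∈ S
      · simp only [hcdef, hj, if_true, one_pow]
        rw [pow_succ]
        ring
      · simp only [hcdef, hj, if_false]
        have hc2 : (Finset.Ioi j).card + (Finset.Iio j).card = n - 1 := by
          rw [Fin.card_Ioi, Fin.card_Iio]; have := j.isLt; omega
        have h2 : (-1:ℝ)^(Finset.Ioi j).card * (-1:ℝ)^(Finset.Ioi j).card = 1 := by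
          rw [← pow_add]; exact Even.neg_one_pow ⟨_, rfl⟩
        have h3 : ((x j)⁻¹)^(Finset.Ioi j).card * ((x j)⁻¹)^(Finset.Iio j).card
            = (x j ^ (n-1))⁻¹ := by
          rw [← pow_add, hc2, inv_pow]
        calc (1:ℝ)
            = ((-1:ℝ)^(Finset.Ioi j).card * (-1:ℝ)^(Finset.Ioi j).card) *
              (x j ^ (n-1) * (((x j)⁻¹)^(Finset.Ioi j).card *
                ((x j)⁻¹)^(Finset.Iio j).card)) := by
              rw [h2, h3, one_mul, mul_inv_cancel₀ (pow_ne_zero _ (hx j))]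
          _ = _ := by ring
    have signEq : (-1 : ℝ) ^ ((((n : ℤ) + 1) * (S.card : ℤ)) - ∑ j ∈ S, ((j : ℤ) + 1)) *
          (∏ j ∈ S, x j ^ n)
        = σ * ((∏ j, c j) *
            ((∏ j : Fin n, (if j ∈ S then (1:ℝ) else -1) ^ (Finset.Ioi j).card) *
             ((∏ j : Fin n, (if j ∈ S then (1:ℝ) else (x j)⁻¹) ^ (Finset.Ioi j).card) *
              (∏ k : Fin n, (if k ∈ S then (1:ℝ) else (x k)⁻¹) ^ (Finset.Iio k).card)))) := by
      calc (-1 : ℝ) ^ ((((n : ℤ) + 1) * (S.card : ℤ)) - ∑ j ∈ S, ((j : ℤ) + 1)) *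
            (∏ j ∈ S, x j ^ n)
          = (-1:ℝ) ^ (∑ j ∈ S, ((Finset.Ioi j).card + 1)) * (∏ j ∈ S, x j ^ n) := by
            rw [hcast, zpow_natCast]
        _ = (∏ j ∈ S, (-1:ℝ) ^ ((Finset.Ioi j).card + 1)) * (∏ j ∈ S, x j ^ n) := by
            rw [Finset.prod_pow_eq_pow_sum]
        _ = ∏ j ∈ S, ((-1:ℝ) ^ ((Finset.Ioi j).card + 1) * x j ^ n) := by
            rw [Finset.prod_mul_distrib]
        _ = ∏ j : Fin n, (if j ∈ S then (-1:ℝ) ^ ((Finset.Ioi j).card + 1) * x j ^ n else 1) := by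
            rw [Finset.prod_ite_mem Finset.univ S
              (fun j => (-1:ℝ) ^ ((Finset.Ioi j).card + 1) * x j ^ n), Finset.univ_inter]
        _ = ∏ j : Fin n, ((-1:ℝ) ^ (Finset.Ioi j).card * (c j *
              ((if j ∈ S then (1:ℝ) else -1) ^ (Finset.Ioi j).card *
               ((if j ∈ S then (1:ℝ) else (x j)⁻¹) ^ (Finset.Ioi j).card *
                (if j ∈ S then (1:ℝ) else (x j)⁻¹) ^ (Finset.Iio j).card)))) :=
            Finset.prod_congr rfl fun j _ => hF j
        _ = _ := by
            rw [hσdef]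
            simp only [Finset.prod_mul_distrib]
    rw [hdetS, prodY, signEq]
    ring
  -- Part II : evaluation of the determinant
  have detW : Matrix.detRowAlternating (bfun + afun)
      = σ * ((∏ i, (1 - x i)) * ((∏ i, ∏ j ∈ Finset.Ioi i, (x j - x i)) *
        (∏ i, ∏ j ∈ Finset.Ioi i, (1 - x i * x j)))) := by
    have entry : ∀ (i j : Fin n), x j ^ (n - 1 - (i:ℕ)) - x j ^ (n + (i:ℕ))
        = ((1 - x j) * x j ^ (n-1)) * Polynomial.eval (t j) (pc (i:ℕ)) := by
      intro i j
      have hi : (i:ℕ) < n := i.isLt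
      have key := pc_eval (x j) (hx j) (i:ℕ)
      have e1 : x j ^ (n-1) = x j ^ (n - 1 - (i:ℕ)) * x j ^ (i:ℕ) := by
        rw [← pow_add]; congr 1; omega
      have e2 : (1 - x j) * ∑ s ∈ Finset.range (2*(i:ℕ)+1), x j ^ s
          = 1 - x j ^ (2*(i:ℕ)+1) := by
        have h := geom_sum_mul (x j) (2*(i:ℕ)+1)
        linear_combination -h
      calc x j ^ (n - 1 - (i:ℕ)) - x j ^ (n + (i:ℕ))
          = x j ^ (n - 1 - (i:ℕ)) * (1 - x j ^ (2*(i:ℕ)+1)) := by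
            rw [mul_sub, mul_one, ← pow_add]
            congr 2
            omega
        _ = x j ^ (n - 1 - (i:ℕ)) * ((1 - x j) * ∑ s ∈ Finset.range (2*(i:ℕ)+1), x j ^ s) := by
            rw [e2]
        _ = (1 - x j) * (x j ^ (n - 1 - (i:ℕ)) * (x j ^ (i:ℕ) * Polynomial.eval (t j) (pc (i:ℕ)))) := by
            rw [key]; ring
        _ = ((1 - x j) * x j ^ (n-1)) * Polynomial.eval (t j) (pc (i:ℕ)) := by
            rw [e1]; ring
    have hrows : (bfun + afun) = fun (j : Fin n) => fun (i : Fin n) => x j ^ (n - 1 - (i:ℕ)) - x j ^ (n + (i:ℕ)) := by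
      funext j i
      simp only [Pi.add_apply, hadef, hbdef]
      ring
    rw [hrows]
    have hdet1 : Matrix.detRowAlternating (fun (j : Fin n) => fun (i : Fin n) => x j ^ (n - 1 - (i:ℕ)) - x j ^ (n + (i:ℕ)))
        = (Matrix.of fun (j : Fin n) (i : Fin n) => x j ^ (n - 1 - (i:ℕ)) - x j ^ (n + (i:ℕ))).det := rfl
    rw [hdet1]
    have htrans : (Matrix.of fun (j : Fin n) (i : Fin n) => x j ^ (n - 1 - (i:ℕ)) - x j ^ (n + (i:ℕ)))
        = (Matrix.of fun (i : Fin n) (j : Fin n) => ((1 - x j) * x j ^ (n-1)) * Polynomial.eval (t j) (pc (i:ℕ)))ᵀ := by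
      ext j i
      simp only [Matrix.transpose_apply, Matrix.of_apply]
      exact entry i j
    rw [htrans, Matrix.det_transpose, Matrix.det_mul_row (fun j => (1 - x j) * x j ^ (n-1))
      (fun (i : Fin n) (j : Fin n) => Polynomial.eval (t j) (pc (i:ℕ)))]
    have hE : Matrix.det (fun (i : Fin n) (j : Fin n) => Polynomial.eval (t j) (pc (i:ℕ)))
        = ∏ j, ∏ k ∈ Finset.Ioi j, (t k - t j) := by
      show (Matrix.of fun (i : Fin n) (j : Fin n) => Polynomial.eval (t j) (pc (i:ℕ))).det = _
      have h1 : (Matrix.of fun (i : Fin n) (j : Fin n) => Polynomial.eval (t j) (pc (i:ℕ)))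
          = (Matrix.of fun (i : Fin n) (j : Fin n) => Polynomial.eval (t i) (pc (j:ℕ)))ᵀ := by
        ext i j; rfl
      have h2 := Matrix.det_eval_matrixOfPolynomials_eq_det_vandermonde t
        (fun j : Fin n => pc (j:ℕ)) (fun i => (pc_spec (i:ℕ)).2) (fun i => (pc_spec (i:ℕ)).1)
      rw [h1, Matrix.det_transpose, ← h2, Matrix.det_vandermonde]
    rw [hE]
    have pairT : ∀ j k : Fin n, t k - t j
        = ((-1) * ((x k - x j) * (1 - x j * x k))) * ((x j)⁻¹ * (x k)⁻¹) := by
      intro j k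
      have hj := hx j
      have hk := hx k
      simp only [htdef]
      field_simp
      ring
    have prodT : (∏ j, ∏ k ∈ Finset.Ioi j, (t k - t j))
        = σ * ((∏ i, ∏ j ∈ Finset.Ioi i, (x j - x i)) *
            (∏ i, ∏ j ∈ Finset.Ioi i, (1 - x i * x j))) *
          ∏ j, ((x j)⁻¹) ^ ((Finset.Ioi j).card + (Finset.Iio j).card) := by
      calc (∏ j, ∏ k ∈ Finset.Ioi j, (t k - t j))
          = ∏ j, ∏ k ∈ Finset.Ioi j,
              (((-1) * ((x k - x j) * (1 - x j * x k))) * ((x j)⁻¹ * (x k)⁻¹)) :=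
            Finset.prod_congr rfl fun j _ => Finset.prod_congr rfl fun k _ => pairT j k
        _ = ((∏ j : Fin n, ∏ k ∈ Finset.Ioi j, (-1:ℝ)) *
              ((∏ j, ∏ k ∈ Finset.Ioi j, (x k - x j)) *
               (∏ j, ∏ k ∈ Finset.Ioi j, (1 - x j * x k)))) *
            ((∏ j : Fin n, ∏ k ∈ Finset.Ioi j, (x j)⁻¹) * (∏ j : Fin n, ∏ k ∈ Finset.Ioi j, (x k)⁻¹)) := by
            simp only [Finset.prod_mul_distrib]
        _ = (σ * ((∏ i, ∏ j ∈ Finset.Ioi i, (x j - x i)) *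
               (∏ i, ∏ j ∈ Finset.Ioi i, (1 - x i * x j)))) *
            ((∏ j : Fin n, ((x j)⁻¹) ^ (Finset.Ioi j).card) * (∏ k : Fin n, ((x k)⁻¹) ^ (Finset.Iio k).card)) := by
            rw [prod_swap_pairs (fun j k => (x k)⁻¹)]
            simp only [Finset.prod_const, hσdef]
        _ = _ := by
            congr 1
            rw [← Finset.prod_mul_distrib]
            exact Finset.prod_congr rfl fun j _ => (pow_add _ _ _).symm
    rw [prodT]
    have hxinv : (∏ j, ((1 - x j) * x j ^ (n-1))) *
        (∏ j, ((x j)⁻¹) ^ ((Finset.Ioi j).card + (Finset.Iio j).card)) = ∏ j, (1 - x j) := by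
      rw [← Finset.prod_mul_distrib]
      apply Finset.prod_congr rfl
      intro j _
      have hc : (Finset.Ioi j).card + (Finset.Iio j).card = n - 1 := by
        rw [Fin.card_Ioi, Fin.card_Iio]; have := j.isLt; omega
      rw [hc, inv_pow, mul_assoc, mul_inv_cancel₀ (pow_ne_zero _ (hx j)), mul_one]
    calc (∏ j, ((1 - x j) * x j ^ (n-1))) *
          (σ * ((∏ i, ∏ j ∈ Finset.Ioi i, (x j - x i)) *
            (∏ i, ∏ j ∈ Finset.Ioi i, (1 - x i * x j))) *
           ∏ j, ((x j)⁻¹) ^ ((Finset.Ioi j).card + (Finset.Iio j).card))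
        = σ * (((∏ j, ((1 - x j) * x j ^ (n-1))) *
            (∏ j, ((x j)⁻¹) ^ ((Finset.Ioi j).card + (Finset.Iio j).card))) *
            ((∏ i, ∏ j ∈ Finset.Ioi i, (x j - x i)) *
             (∏ i, ∏ j ∈ Finset.Ioi i, (1 - x i * x j)))) := by ring
      _ = _ := by rw [hxinv]
  -- assembly
  calc ∑ S : Finset (Fin n),
        (-1 : ℝ) ^ ((((n : ℤ) + 1) * (S.card : ℤ)) - ∑ j ∈ S, ((j : ℤ) + 1)) *
          (∏ j ∈ S, x j ^ n) *
          ((∏ j ∈ S, ∏ k ∈ S.filter (fun k => j < k), (x k - x j)) *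
           (∏ j ∈ Sᶜ, ∏ k ∈ Sᶜ.filter (fun k => j < k), (x k - x j)) *
           (∏ j, ∏ k ∈ Finset.Ioi j, if (j ∈ S ↔ k ∈ S) then (1:ℝ) else 1 - x j * x k))
      = ∑ S : Finset (Fin n), σ * Matrix.detRowAlternating (S.piecewise bfun afun) :=
        Finset.sum_congr rfl fun S _ => termEq S
    _ = σ * ∑ S : Finset (Fin n), Matrix.detRowAlternating (S.piecewise bfun afun) := by
        rw [Finset.mul_sum]
    _ = σ * Matrix.detRowAlternating (bfun + afun) := by
        congr 1
        have h := (Matrix.detRowAlternating (R := ℝ) (n := Fin n)).toMultilinearMap.map_add_univ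
          bfun afun
        simp only [AlternatingMap.coe_multilinearMap] at h
        rw [h]
    _ = (σ * σ) * ((∏ i, (1 - x i)) * ((∏ i, ∏ j ∈ Finset.Ioi i, (x j - x i)) *
        (∏ i, ∏ j ∈ Finset.Ioi i, (1 - x i * x j)))) := by rw [detW]; ring
    _ = _ := by rw [hσ2, one_mul]


lemma stepB (n : ℕ) (x : Fin n → ℝ) :
    ∑ S : Finset (Fin n),
        (-1 : ℝ) ^ ((((n : ℤ) + 1) * (S.card : ℤ)) - ∑ j ∈ S, ((j : ℤ) + 1)) *
          (∏ j ∈ S, x j ^ n) *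
          ((∏ j ∈ S, ∏ k ∈ S.filter (fun k => j < k), (x k - x j)) *
           (∏ j ∈ Sᶜ, ∏ k ∈ Sᶜ.filter (fun k => j < k), (x k - x j)) *
           (∏ j, ∏ k ∈ Finset.Ioi j, if (j ∈ S ↔ k ∈ S) then (1:ℝ) else 1 - x j * x k)) =
      (∏ i, (1 - x i)) * ((∏ i, ∏ j ∈ Finset.Ioi i, (x j - x i)) *
        (∏ i, ∏ j ∈ Finset.Ioi i, (1 - x i * x j))) := by
  classical
  set f : ℝ → ℝ := fun u =>
    ∑ S : Finset (Fin n),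
        (-1 : ℝ) ^ ((((n : ℤ) + 1) * (S.card : ℤ)) - ∑ j ∈ S, ((j : ℤ) + 1)) *
          (∏ j ∈ S, (x j + u) ^ n) *
          ((∏ j ∈ S, ∏ k ∈ S.filter (fun k => j < k), ((x k + u) - (x j + u))) *
           (∏ j ∈ Sᶜ, ∏ k ∈ Sᶜ.filter (fun k => j < k), ((x k + u) - (x j + u))) *
           (∏ j, ∏ k ∈ Finset.Ioi j, if (j ∈ S ↔ k ∈ S) then (1:ℝ)
              else 1 - (x j + u) * (x k + u))) with hfdef
  set g : ℝ → ℝ := fun u =>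
    (∏ i, (1 - (x i + u))) * ((∏ i, ∏ j ∈ Finset.Ioi i, ((x j + u) - (x i + u))) *
        (∏ i, ∏ j ∈ Finset.Ioi i, (1 - (x i + u) * (x j + u)))) with hgdef
  have hsub : ∀ (j k : Fin n), Continuous (fun u : ℝ => (x k + u) - (x j + u)) := by
    intro j k; fun_prop
  have hone : ∀ (j k : Fin n), Continuous (fun u : ℝ => 1 - (x j + u) * (x k + u)) := by
    intro j k; fun_prop
  have hpow : ∀ j : Fin n, Continuous (fun u : ℝ => (x j + u) ^ n) := by
    intro j; fun_prop
  have honeminus : ∀ i : Fin n, Continuous (fun u : ℝ => 1 - (x i + u)) := by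
    intro i; fun_prop
  have hif : ∀ (S : Finset (Fin n)) (j k : Fin n),
      Continuous (fun u : ℝ => if (j ∈ S ↔ k ∈ S) then (1:ℝ)
        else 1 - (x j + u) * (x k + u)) := by
    intro S j k
    by_cases hP : (j ∈ S ↔ k ∈ S)
    · simpa [hP] using (continuous_const : Continuous fun _ : ℝ => (1:ℝ))
    · simpa [hP] using hone j k
  have hfc : Continuous f := by
    rw [hfdef]
    refine continuous_finset_sum _ fun S _ => ?_
    refine Continuous.mul (Continuous.mul continuous_const
      (continuous_finset_prod _ fun j _ => hpow j)) ?_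
    exact Continuous.mul
      (Continuous.mul
        (continuous_finset_prod _ fun j _ => continuous_finset_prod _ fun k _ => hsub j k)
        (continuous_finset_prod _ fun j _ => continuous_finset_prod _ fun k _ => hsub j k))
      (continuous_finset_prod _ fun j _ => continuous_finset_prod _ fun k _ => hif S j k)
  have hgc : Continuous g := by
    rw [hgdef]
    refine Continuous.mul (continuous_finset_prod _ fun i _ => honeminus i) ?_
    exact Continuous.mul
      (continuous_finset_prod _ fun j _ => continuous_finset_prod _ fun k _ => hsub j k)
      (continuous_finset_prod _ fun j _ => continuous_finset_prod _ fun k _ => hone j k)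
  have heq : Set.EqOn f g {u : ℝ | ∀ j, x j + u ≠ 0} := by
    intro u hu
    exact stepA n (fun j => x j + u) hu
  have hd : Dense {u : ℝ | ∀ j, x j + u ≠ 0} := by
    have hset : {u : ℝ | ∀ j, x j + u ≠ 0} = (Set.range (fun j => -(x j)))ᶜ := by
      ext u
      simp only [Set.mem_setOf_eq, Set.mem_compl_iff, Set.mem_range, not_exists]
      constructor
      · intro h j hj
        exact h j (by rw [← hj]; ring)
      · intro h j hj
        exact h j (by linarith [hj] )
    rw [hset]
    exact ((Set.finite_range _).countable).dense_compl ℝ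
  have hfg : f = g := Continuous.ext_on hd hfc hgc heq
  have h0 := congrFun hfg 0
  simpa only [hfdef, hgdef, add_zero] using h0

end MainBaseAux




/-- The pole-distribution factor `Φ_T` of the subtuple of `λ` indexed by the
finite set `T` (with the inherited index order); `Φ_∅ = 1`. -/
noncomputable def PhiSet (n : ℕ) (l : Fin n → ℝ) (T : Finset (Fin n)) : ℝ :=
  (∏ j ∈ T, ∏ k ∈ T.filter (fun k => j < k), (l k - l j) / (1 - l j * l k)) *
    ∏ i ∈ T, (1 - l i)⁻¹

/-- Base case `N = n` of the main theorem: the alternating sum equals the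
Vandermonde product `∏_{i<j} (λⱼ - λᵢ)`. -/
theorem main_theorem_base_case (n : ℕ) (l : Fin n → ℝ)
    (hl : Function.Injective l) (h1 : ∀ i, l i ≠ 1)
    (h2 : ∀ i j, i ≠ j → l i * l j ≠ 1) :
    ∑ S : Finset (Fin n),
        (-1 : ℝ) ^ ((((n : ℤ) + 1) * (S.card : ℤ)) - ∑ j ∈ S, ((j : ℤ) + 1)) *
          (∏ j ∈ S, l j ^ n) * PhiSet n l S * PhiSet n l Sᶜ =
      ∏ i : Fin n, ∏ j ∈ Finset.Ioi i, (l j - l i) := by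
  classical
  open MainBaseAux in
  have hD : ∀ (T : Finset (Fin n)),
      (∏ j ∈ T, ∏ k ∈ T.filter (fun k => j < k), (1 - l j * l k)) ≠ 0 := by
    intro T
    rw [Finset.prod_ne_zero_iff]
    intro j _
    rw [Finset.prod_ne_zero_iff]
    intro k hk
    have hjk : j ≠ k := ne_of_lt (Finset.mem_filter.mp hk).2
    exact sub_ne_zero.mpr (Ne.symm (h2 j k hjk))
  have hDall : (∏ j, ∏ k ∈ Finset.Ioi j, (1 - l j * l k)) ≠ 0 := by
    rw [Finset.prod_ne_zero_iff]
    intro j _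
    rw [Finset.prod_ne_zero_iff]
    intro k hk
    have hjk : j ≠ k := ne_of_lt (Finset.mem_Ioi.mp hk)
    exact sub_ne_zero.mpr (Ne.symm (h2 j k hjk))
  have hE : (∏ i, (1 - l i)) ≠ 0 :=
    Finset.prod_ne_zero_iff.mpr fun i _ => sub_ne_zero.mpr (Ne.symm (h1 i))
  have hPhi : ∀ S : Finset (Fin n),
      PhiSet n l S * PhiSet n l Sᶜ *
        ((∏ i, (1 - l i)) * (∏ j, ∏ k ∈ Finset.Ioi j, (1 - l j * l k)))
      = (∏ j ∈ S, ∏ k ∈ S.filter (fun k => j < k), (l k - l j)) *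
        (∏ j ∈ Sᶜ, ∏ k ∈ Sᶜ.filter (fun k => j < k), (l k - l j)) *
        (∏ j, ∏ k ∈ Finset.Ioi j, if (j ∈ S ↔ k ∈ S) then (1:ℝ) else 1 - l j * l k) := by
    intro S
    have hq : ∀ (T : Finset (Fin n)),
        (∏ j ∈ T, ∏ k ∈ T.filter (fun k => j < k), (l k - l j) / (1 - l j * l k))
          = (∏ j ∈ T, ∏ k ∈ T.filter (fun k => j < k), (l k - l j)) /
            (∏ j ∈ T, ∏ k ∈ T.filter (fun k => j < k), (1 - l j * l k)) := by
      intro T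
      simp only [Finset.prod_div_distrib]
    have hEsplit : (∏ i ∈ S, (1 - l i)⁻¹) * (∏ i ∈ Sᶜ, (1 - l i)⁻¹)
        = (∏ i, (1 - l i))⁻¹ := by
      rw [Finset.prod_mul_prod_compl, Finset.prod_inv_distrib]
    have hDsplit : (∏ j, ∏ k ∈ Finset.Ioi j, (1 - l j * l k))
        = (∏ j ∈ S, ∏ k ∈ S.filter (fun k => j < k), (1 - l j * l k)) *
          (∏ j ∈ Sᶜ, ∏ k ∈ Sᶜ.filter (fun k => j < k), (1 - l j * l k)) *
          (∏ j, ∏ k ∈ Finset.Ioi j, if (j ∈ S ↔ k ∈ S) then (1:ℝ) else 1 - l j * l k) := by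
      have h := prod_pairs_split_mixed S (fun j k => 1 - l j * l k) (fun j k => 1 - l j * l k)
      simpa using h
    unfold PhiSet
    rw [hq S, hq Sᶜ, hDsplit]
    calc ((∏ j ∈ S, ∏ k ∈ S.filter (fun k => j < k), (l k - l j)) /
            (∏ j ∈ S, ∏ k ∈ S.filter (fun k => j < k), (1 - l j * l k)) *
          ∏ i ∈ S, (1 - l i)⁻¹) *
         ((∏ j ∈ Sᶜ, ∏ k ∈ Sᶜ.filter (fun k => j < k), (l k - l j)) /
            (∏ j ∈ Sᶜ, ∏ k ∈ Sᶜ.filter (fun k => j < k), (1 - l j * l k)) *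
          ∏ i ∈ Sᶜ, (1 - l i)⁻¹) *
         ((∏ i, (1 - l i)) *
          ((∏ j ∈ S, ∏ k ∈ S.filter (fun k => j < k), (1 - l j * l k)) *
           (∏ j ∈ Sᶜ, ∏ k ∈ Sᶜ.filter (fun k => j < k), (1 - l j * l k)) *
           (∏ j, ∏ k ∈ Finset.Ioi j, if (j ∈ S ↔ k ∈ S) then (1:ℝ) else 1 - l j * l k)))
        = ((∏ j ∈ S, ∏ k ∈ S.filter (fun k => j < k), (l k - l j)) *
           (∏ j ∈ Sᶜ, ∏ k ∈ Sᶜ.filter (fun k => j < k), (l k - l j)) *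
           (∏ j, ∏ k ∈ Finset.Ioi j, if (j ∈ S ↔ k ∈ S) then (1:ℝ) else 1 - l j * l k)) *
          ((((∏ i ∈ S, (1 - l i)⁻¹) * (∏ i ∈ Sᶜ, (1 - l i)⁻¹)) * (∏ i, (1 - l i))) *
           (((∏ j ∈ S, ∏ k ∈ S.filter (fun k => j < k), (1 - l j * l k))⁻¹ *
              (∏ j ∈ S, ∏ k ∈ S.filter (fun k => j < k), (1 - l j * l k))) *
            ((∏ j ∈ Sᶜ, ∏ k ∈ Sᶜ.filter (fun k => j < k), (1 - l j * l k))⁻¹ *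
              (∏ j ∈ Sᶜ, ∏ k ∈ Sᶜ.filter (fun k => j < k), (1 - l j * l k))))) := by
          rw [div_eq_mul_inv, div_eq_mul_inv]
          ring
      _ = _ := by
          rw [hEsplit, inv_mul_cancel₀ (hE), inv_mul_cancel₀ (hD S), inv_mul_cancel₀ (hD Sᶜ)]
          ring
  have key := stepB n l
  have hne : (∏ i, (1 - l i)) * (∏ j, ∏ k ∈ Finset.Ioi j, (1 - l j * l k)) ≠ 0 :=
    mul_ne_zero hE hDall
  apply mul_right_cancel₀ hne
  rw [Finset.sum_mul]
  have expand : ∀ S : Finset (Fin n),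
      (-1 : ℝ) ^ ((((n : ℤ) + 1) * (S.card : ℤ)) - ∑ j ∈ S, ((j : ℤ) + 1)) *
          (∏ j ∈ S, l j ^ n) * PhiSet n l S * PhiSet n l Sᶜ *
        ((∏ i, (1 - l i)) * (∏ j, ∏ k ∈ Finset.Ioi j, (1 - l j * l k)))
      = (-1 : ℝ) ^ ((((n : ℤ) + 1) * (S.card : ℤ)) - ∑ j ∈ S, ((j : ℤ) + 1)) *
          (∏ j ∈ S, l j ^ n) *
          ((∏ j ∈ S, ∏ k ∈ S.filter (fun k => j < k), (l k - l j)) *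
           (∏ j ∈ Sᶜ, ∏ k ∈ Sᶜ.filter (fun k => j < k), (l k - l j)) *
           (∏ j, ∏ k ∈ Finset.Ioi j, if (j ∈ S ↔ k ∈ S) then (1:ℝ) else 1 - l j * l k)) := by
    intro S
    rw [← hPhi S]
    ring
  rw [Finset.sum_congr rfl fun S _ => expand S, key]
  ring
end
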